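/- arXiv:2011.10806 — 6 statements merged into one kernel-verified Lean document; each statement's English description precedes it below -/
import Mathlib

section
/- Let A : [0,∞) → ℝ^{d×d} be continuous satisfying ⟨A(t)y, y⟩ ≥ δ|y|² and |A(t)| ≤ C for all t ≥ 0, y ∈ ℝ^d, with constants 0 < δ ≤ C. Let Φ solve dΦ_t/dt = Φ_t A(t), Φ_0 = I_d (so Φ_t is invertible for all t). Then for all 0 ≤ s ≤ t and all z ∈ ℝ^d: (1/√d) e^{-C(t-s)}|z| ≤ |Φ_s^* (Φ_t^{-1})^* z| ≤ √d e^{-δ(t-s)}|z|. -/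
/-!
For `c = Φ_t⁻ᵀ z` the vector `w u = Φ_uᵀ c` solves `w' = A(u)ᵀ w` and satisfies `w t = z`, so its
energy `|w u|²` has derivative `2 ⟨A(u) w, w⟩ ∈ [2δ |w|², 2C |w|²]`. Grönwall's inequality on
`[s, t]` in both directions gives `e^{-C(t-s)} |z| ≤ |w s| ≤ e^{-δ(t-s)} |z|`.
-/

open Matrix Set Real

section Gronwall

variable {f f' : ℝ → ℝ} {K a b : ℝ}

theorem le_mul_exp_of_hasDerivWithinAt_le (hf : ContinuousOn f (Icc a b))
    (hf' : ∀ x ∈ Ico a b, HasDerivWithinAt f (f' x) (Ici x) x)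
    (bound : ∀ x ∈ Ico a b, f' x ≤ K * f x) :
    ∀ x ∈ Icc a b, f x ≤ f a * exp (K * (x - a)) := by
  intro x hx
  rw [← gronwallBound_ε0]
  refine le_gronwallBound_of_liminf_deriv_right_le hf (fun x hx r hr => ?_) le_rfl
    (by simpa using bound) x hx
  simpa [slope_def_field, div_eq_inv_mul] using (hf' x hx).liminf_right_slope_le hr

theorem mul_exp_le_of_le_hasDerivWithinAt (hf : ContinuousOn f (Icc a b))
    (hf' : ∀ x ∈ Ico a b, HasDerivWithinAt f (f' x) (Ici x) x)
    (bound : ∀ x ∈ Ico a b, K * f x ≤ f' x) :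
    ∀ x ∈ Icc a b, f a * exp (K * (x - a)) ≤ f x := by
  intro x hx
  have := le_mul_exp_of_hasDerivWithinAt_le (f := -f) (f' := -f') hf.neg
    (fun x hx => (hf' x hx).neg) (fun x hx => by simpa using bound x hx) x hx
  simpa using this

end Gronwall

theorem hasDerivWithinAt_const_vecMul {m n : Type*} [Fintype m] (c : m → ℝ)
    {Φ : ℝ → Matrix m n ℝ} {Φ' : Matrix m n ℝ} {s : Set ℝ} {x : ℝ}
    (hΦ : ∀ i j, HasDerivWithinAt (fun u => Φ u i j) (Φ' i j) s x) :
    HasDerivWithinAt (fun u => c ᵥ* Φ u) (c ᵥ* Φ') s x :=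
  hasDerivWithinAt_pi.2 fun j =>
    HasDerivWithinAt.fun_sum fun i _ => (hΦ i j).const_mul (c i)

theorem HasDerivWithinAt.sum_sq {ι : Type*} [Fintype ι] {v : ℝ → ι → ℝ} {v' : ι → ℝ}
    {s : Set ℝ} {x : ℝ} (hv : HasDerivWithinAt v v' s x) :
    HasDerivWithinAt (fun u => ∑ i, v u i ^ 2) (2 * (v' ⬝ᵥ v x)) s x := by
  rw [dotProduct, Finset.mul_sum]
  exact HasDerivWithinAt.fun_sum fun i _ =>
    ((hasDerivWithinAt_pi.1 hv i).pow 2).congr_deriv (by push_cast; ring)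

theorem mulVec_dotProduct_le_of_sqrt_sum_sq_le {ι : Type*} [Fintype ι]
    {M : Matrix ι ι ℝ} {C : ℝ} {y : ι → ℝ}
    (h : √(∑ i, (M *ᵥ y) i ^ 2) ≤ C * √(∑ i, y i ^ 2)) :
    (M *ᵥ y) ⬝ᵥ y ≤ C * ∑ i, y i ^ 2 :=
  calc (M *ᵥ y) ⬝ᵥ y ≤ √(∑ i, (M *ᵥ y) i ^ 2) * √(∑ i, y i ^ 2) :=
        Real.sum_mul_le_sqrt_mul_sqrt _ _ _
    _ ≤ C * √(∑ i, y i ^ 2) * √(∑ i, y i ^ 2) := by gcongr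
    _ = C * ∑ i, y i ^ 2 := by
        rw [mul_assoc, mul_self_sqrt (Finset.sum_nonneg fun i _ => sq_nonneg _)]

theorem sqrt_mul_exp_two_mul (x K : ℝ) : √(x * exp (2 * K)) = √x * exp K := by
  rw [sqrt_mul' _ (exp_pos _).le, two_mul, exp_add, sqrt_mul_self (exp_pos _).le]

section AdjointSolution

variable {ι : Type*} [Fintype ι] {A Φ : ℝ → Matrix ι ι ℝ}

theorem hasDerivWithinAt_sum_sq_vecMul (c : ι → ℝ) {s : Set ℝ} {x : ℝ}
    (hΦ : ∀ i j, HasDerivWithinAt (fun u => Φ u i j) ((Φ x * A x) i j) s x) :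
    HasDerivWithinAt (fun u => ∑ i, (c ᵥ* Φ u) i ^ 2)
      (2 * ((A x *ᵥ (c ᵥ* Φ x)) ⬝ᵥ (c ᵥ* Φ x))) s x := by
  have := (hasDerivWithinAt_const_vecMul c hΦ).sum_sq
  rwa [← vecMul_vecMul, ← dotProduct_mulVec, dotProduct_comm] at this

variable {δ C a s t : ℝ}

theorem sum_sq_vecMul_bounds
    (hΦ : ∀ i j, ∀ u ∈ Ici a,
      HasDerivWithinAt (fun u => Φ u i j) ((Φ u * A u) i j) (Ici a) u)
    (hcoer : ∀ u, a ≤ u → ∀ y : ι → ℝ, δ * ∑ i, y i ^ 2 ≤ (A u *ᵥ y) ⬝ᵥ y)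
    (hbd : ∀ u, a ≤ u → ∀ y : ι → ℝ,
      √(∑ i, (A u *ᵥ y) i ^ 2) ≤ C * √(∑ i, y i ^ 2))
    (c : ι → ℝ) (has : a ≤ s) (hst : s ≤ t) :
    (∑ i, (c ᵥ* Φ s) i ^ 2) * exp (2 * δ * (t - s)) ≤ ∑ i, (c ᵥ* Φ t) i ^ 2 ∧
      ∑ i, (c ᵥ* Φ t) i ^ 2 ≤ (∑ i, (c ᵥ* Φ s) i ^ 2) * exp (2 * C * (t - s)) := by
  have hderiv : ∀ u ∈ Ici a, HasDerivWithinAt (fun u => ∑ i, (c ᵥ* Φ u) i ^ 2)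
      (2 * ((A u *ᵥ (c ᵥ* Φ u)) ⬝ᵥ (c ᵥ* Φ u))) (Ici a) u :=
    fun u hu => hasDerivWithinAt_sum_sq_vecMul c fun i j => hΦ i j u hu
  have hsub : Icc s t ⊆ Ici a := fun u hu => has.trans hu.1
  have hcont : ContinuousOn (fun u => ∑ i, (c ᵥ* Φ u) i ^ 2) (Icc s t) :=
    fun u hu => (hderiv u (hsub hu)).continuousWithinAt.mono hsub
  have hright : ∀ u ∈ Ico s t, HasDerivWithinAt (fun u => ∑ i, (c ᵥ* Φ u) i ^ 2)
      (2 * ((A u *ᵥ (c ᵥ* Φ u)) ⬝ᵥ (c ᵥ* Φ u))) (Ici u) u := fun u hu =>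
    (hderiv u (hsub (Ico_subset_Icc_self hu))).mono (Ici_subset_Ici.2 (has.trans hu.1))
  refine ⟨mul_exp_le_of_le_hasDerivWithinAt hcont hright (fun u hu => ?_) t ⟨hst, le_rfl⟩,
    le_mul_exp_of_hasDerivWithinAt_le hcont hright (fun u hu => ?_) t ⟨hst, le_rfl⟩⟩
  · rw [mul_assoc]
    exact mul_le_mul_of_nonneg_left (hcoer u (has.trans hu.1) _) zero_le_two
  · rw [mul_assoc]
    exact mul_le_mul_of_nonneg_left
      (mulVec_dotProduct_le_of_sqrt_sum_sq_le (hbd u (has.trans hu.1) _)) zero_le_two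

theorem sqrt_sum_sq_transpose_mul_bounds [DecidableEq ι]
    (hΦ : ∀ i j, ∀ u ∈ Ici a,
      HasDerivWithinAt (fun u => Φ u i j) ((Φ u * A u) i j) (Ici a) u)
    (hcoer : ∀ u, a ≤ u → ∀ y : ι → ℝ, δ * ∑ i, y i ^ 2 ≤ (A u *ᵥ y) ⬝ᵥ y)
    (hbd : ∀ u, a ≤ u → ∀ y : ι → ℝ,
      √(∑ i, (A u *ᵥ y) i ^ 2) ≤ C * √(∑ i, y i ^ 2))
    (hΦt : IsUnit (Φ t)) (has : a ≤ s) (hst : s ≤ t) (z : ι → ℝ) :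
    exp (-C * (t - s)) * √(∑ i, z i ^ 2) ≤ √(∑ i, (((Φ s)ᵀ * ((Φ t)⁻¹)ᵀ) *ᵥ z) i ^ 2) ∧
      √(∑ i, (((Φ s)ᵀ * ((Φ t)⁻¹)ᵀ) *ᵥ z) i ^ 2) ≤ exp (-δ * (t - s)) * √(∑ i, z i ^ 2) := by
  set c := z ᵥ* (Φ t)⁻¹
  have hs : ((Φ s)ᵀ * ((Φ t)⁻¹)ᵀ) *ᵥ z = c ᵥ* Φ s := by
    rw [← transpose_mul, mulVec_transpose, vecMul_vecMul]
  have ht : c ᵥ* Φ t = z := by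
    rw [vecMul_vecMul, nonsing_inv_mul _ ((isUnit_iff_isUnit_det _).1 hΦt), vecMul_one]
  obtain ⟨hlow, hup⟩ := sum_sq_vecMul_bounds hΦ hcoer hbd c has hst
  rw [hs, ← ht]
  replace hlow := sqrt_le_sqrt hlow
  replace hup := sqrt_le_sqrt hup
  rw [mul_assoc 2, sqrt_mul_exp_two_mul] at hlow hup
  constructor
  · rw [neg_mul, exp_neg, inv_mul_le_iff₀ (exp_pos _)]
    exact hup.trans_eq (mul_comm _ _)
  · rw [neg_mul, exp_neg, le_inv_mul_iff₀ (exp_pos _)]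
    exact (mul_comm _ _).trans_le hlow

end AdjointSolution

theorem stmt6_general {d : ℕ} (A : ℝ → Matrix (Fin d) (Fin d) ℝ)
    (δ C : ℝ)
    (hAcoer : ∀ t : ℝ, 0 ≤ t → ∀ y : Fin d → ℝ,
      δ * ∑ i, (y i) ^ 2 ≤ (A t).mulVec y ⬝ᵥ y)
    (hAbd : ∀ t : ℝ, 0 ≤ t → ∀ y : Fin d → ℝ,
      Real.sqrt (∑ i, ((A t).mulVec y i) ^ 2) ≤ C * Real.sqrt (∑ i, (y i) ^ 2))
    (Φ : ℝ → Matrix (Fin d) (Fin d) ℝ)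
    (hΦinv : ∀ t : ℝ, 0 ≤ t → IsUnit (Φ t))
    (hΦ : ∀ i j, ∀ t ∈ Set.Ici (0 : ℝ),
      HasDerivWithinAt (fun u => Φ u i j) ((Φ t * A t) i j) (Set.Ici 0) t) :
    ∀ s t : ℝ, 0 ≤ s → s ≤ t → ∀ z : Fin d → ℝ,
      (1 / Real.sqrt d) * Real.exp (-C * (t - s)) * Real.sqrt (∑ i, (z i) ^ 2) ≤
        Real.sqrt (∑ i, (((Φ s)ᵀ * ((Φ t)⁻¹)ᵀ).mulVec z i) ^ 2) ∧
      Real.sqrt (∑ i, (((Φ s)ᵀ * ((Φ t)⁻¹)ᵀ).mulVec z i) ^ 2) ≤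
        Real.sqrt d * Real.exp (-δ * (t - s)) * Real.sqrt (∑ i, (z i) ^ 2) := by
  intro s t hs hst z
  obtain ⟨hlow, hup⟩ :=
    sqrt_sum_sq_transpose_mul_bounds hΦ hAcoer hAbd (hΦinv t (hs.trans hst)) hs hst z
  rcases Nat.eq_zero_or_pos d with rfl | hd_pos
  · simp
  have hd : 1 ≤ √(d : ℝ) := one_le_sqrt.2 (by exact_mod_cast hd_pos)
  have hd_inv : 1 / √(d : ℝ) ≤ 1 := div_le_one_of_le₀ hd (by positivity)
  rw [mul_assoc, mul_assoc]
  exact ⟨(mul_le_of_le_one_left (by positivity) hd_inv).trans hlow,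
    hup.trans (le_mul_of_one_le_left (by positivity) hd)⟩

theorem stmt6 {d : ℕ} (A : ℝ → Matrix (Fin d) (Fin d) ℝ)
    (hAcont : ∀ i j, Continuous fun t => A t i j)
    (δ C : ℝ) (hδ : 0 < δ) (hδC : δ ≤ C)
    (hAcoer : ∀ t : ℝ, 0 ≤ t → ∀ y : Fin d → ℝ,
      δ * ∑ i, (y i) ^ 2 ≤ (A t).mulVec y ⬝ᵥ y)
    (hAbd : ∀ t : ℝ, 0 ≤ t → ∀ y : Fin d → ℝ,
      Real.sqrt (∑ i, ((A t).mulVec y i) ^ 2) ≤ C * Real.sqrt (∑ i, (y i) ^ 2))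
    (Φ : ℝ → Matrix (Fin d) (Fin d) ℝ)
    (hΦ0 : Φ 0 = 1)
    (hΦinv : ∀ t : ℝ, 0 ≤ t → IsUnit (Φ t))
    (hΦ : ∀ i j, ∀ t ∈ Set.Ici (0 : ℝ),
      HasDerivWithinAt (fun u => Φ u i j) ((Φ t * A t) i j) (Set.Ici 0) t) :
    ∀ s t : ℝ, 0 ≤ s → s ≤ t → ∀ z : Fin d → ℝ,
      (1 / Real.sqrt d) * Real.exp (-C * (t - s)) * Real.sqrt (∑ i, (z i) ^ 2) ≤
        Real.sqrt (∑ i, (((Φ s)ᵀ * ((Φ t)⁻¹)ᵀ).mulVec z i) ^ 2) ∧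
      Real.sqrt (∑ i, (((Φ s)ᵀ * ((Φ t)⁻¹)ᵀ).mulVec z i) ^ 2) ≤
        Real.sqrt d * Real.exp (-δ * (t - s)) * Real.sqrt (∑ i, (z i) ^ 2) :=
  stmt6_general A δ C hAcoer hAbd Φ hΦinv hΦ
end

section
/- Let ν be a Lévy measure on ℝ^d (i.e., ν({0}) = 0 and ∫ (1 ∧ |z|²) ν(dz) < ∞) with ∫_{|u|>1} |u|^β ν(du) < ∞ for some β ∈ (0,1). Then the characteristic exponent ψ(z) = ∫_{ℝ^d} (e^{i⟨u,z⟩} - 1 - i⟨u,z⟩ 1_{|u|≤1}) ν(du) is locally Hölder continuous with Hölder exponent β; in particular there is a constant C such that |ψ(z₁) - ψ(z₂)| ≤ C|z₁ - z₂|^β whenever |z₁|, |z₂| ≤ 1/2. -/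
/-!
For `‖u‖ ≤ 1` the map `θ ↦ e^{iθ} - 1 - iθ` has derivative `i(e^{iθ} - 1)`, of modulus at most
`|θ|`, so by the mean value theorem the integrands at `z₁, z₂` (with `‖zᵢ‖ ≤ 1/2`) differ by at
most `‖u‖² ‖z₁ - z₂‖ / 2`. For `‖u‖ > 1` the compensator vanishes and
`|e^{ia} - e^{ib}| ≤ min (|a - b|) 2 ≤ 2 |a - b|^β`, which gives `2 ‖u‖^β ‖z₁ - z₂‖^β`.
Both bounds are dominated by `2 (min 1 ‖u‖² + 1_{‖u‖>1} ‖u‖^β) ‖z₁ - z₂‖^β`, and the weight is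
`ν`-integrable by the two moment conditions.
-/

open MeasureTheory
open scoped RealInnerProductSpace ENNReal

/-- The characteristic exponent of a pure-jump Lévy measure `ν`. -/
noncomputable def levyCharExp {d : ℕ} (ν : Measure (EuclideanSpace ℝ (Fin d)))
    (z : EuclideanSpace ℝ (Fin d)) : ℂ :=
  ∫ u, (Complex.exp (Complex.I * (⟪u, z⟫ : ℝ)) - 1 -
      Complex.I * (⟪u, z⟫ : ℝ) *
        Set.indicator {u : EuclideanSpace ℝ (Fin d) | ‖u‖ ≤ 1} (fun _ => (1 : ℂ)) u) ∂ν

open Complex in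
theorem norm_exp_I_mul_sub_exp_I_mul_le_rpow {β : ℝ} (hβ0 : 0 ≤ β) (hβ1 : β ≤ 1) (a b : ℝ) :
    ‖exp (I * a) - exp (I * b)‖ ≤ 2 * |a - b| ^ β := by
  have hfactor : exp (I * a) - exp (I * b) = exp (I * b) * (exp (I * ↑(a - b)) - 1) := by
    rw [mul_sub, mul_one, ← exp_add]; congr 3; push_cast; ring
  rw [hfactor, norm_mul, norm_exp_I_mul_ofReal, one_mul]
  rcases le_or_gt |a - b| 1 with hab | hab
  · calc ‖exp (I * ↑(a - b)) - 1‖ ≤ |a - b| := Real.norm_exp_I_mul_ofReal_sub_one_le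
      _ ≤ |a - b| ^ β := Real.self_le_rpow_of_le_one (abs_nonneg _) hab hβ1
      _ ≤ 2 * |a - b| ^ β := by linarith [Real.rpow_nonneg (abs_nonneg (a - b)) β]
  · calc ‖exp (I * ↑(a - b)) - 1‖ ≤ ‖exp (I * ↑(a - b))‖ + ‖(1 : ℂ)‖ := norm_sub_le _ _
      _ = 2 := by rw [norm_exp_I_mul_ofReal]; norm_num
      _ ≤ 2 * |a - b| ^ β := by linarith [Real.one_le_rpow hab.le hβ0]

open Complex in
theorem norm_exp_I_mul_sub_one_sub_sub_le {a b M : ℝ} (ha : |a| ≤ M) (hb : |b| ≤ M) :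
    ‖(exp (I * a) - 1 - I * a) - (exp (I * b) - 1 - I * b)‖ ≤ M * |a - b| := by
  have hderiv (θ : ℝ) :
      HasDerivAt (fun t : ℝ => exp (I * t) - 1 - I * t) (I * (exp (I * θ) - 1)) θ := by
    have hlin : HasDerivAt (fun w : ℂ => I * w) I θ := by
      simpa using (hasDerivAt_id (θ : ℂ)).const_mul I
    convert ((hlin.cexp.sub_const 1).sub hlin).comp_ofReal using 1
    · rfl
    · ring
  have hbound : ∀ θ ∈ Set.Icc (-M) M, ‖I * (exp (I * θ) - 1)‖ ≤ M := fun θ hθ => by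
    rw [norm_mul, norm_I, one_mul]
    exact Real.norm_exp_I_mul_ofReal_sub_one_le.trans (abs_le.mpr hθ)
  simpa [Real.norm_eq_abs] using (convex_Icc (-M) M).norm_image_sub_le_of_norm_hasDerivWithin_le
    (fun θ _ => (hderiv θ).hasDerivWithinAt) hbound (abs_le.mp hb) (abs_le.mp ha)

section LevyIntegrand

variable {E : Type*} [NormedAddCommGroup E]

noncomputable def levyWeight (β : ℝ) (u : E) : ℝ :=
  min 1 (‖u‖ ^ 2) + {u : E | 1 < ‖u‖}.indicator (fun u => ‖u‖ ^ β) u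

lemma integrable_levyWeight [MeasurableSpace E] [OpensMeasurableSpace E] {ν : Measure E} {β : ℝ}
    (hν2 : ∫⁻ z, ENNReal.ofReal (min 1 (‖z‖ ^ 2)) ∂ν ≠ ∞)
    (hνβ : ∫⁻ z in {z : E | 1 < ‖z‖}, ENNReal.ofReal (‖z‖ ^ β) ∂ν ≠ ∞) :
    Integrable (levyWeight β) ν := by
  have hsmall : Integrable (fun u : E => min 1 (‖u‖ ^ 2)) ν := by
    refine (integrable_toReal_of_lintegral_ne_top (by fun_prop) hν2).congr (ae_of_all _ fun u => ?_)
    exact ENNReal.toReal_ofReal (by positivity)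
  have hlarge : IntegrableOn (fun u : E => ‖u‖ ^ β) {z : E | 1 < ‖z‖} ν := by
    refine (integrable_toReal_of_lintegral_ne_top (by fun_prop) hνβ).congr (ae_of_all _ fun u => ?_)
    exact ENNReal.toReal_ofReal (by positivity)
  exact hsmall.add (hlarge.integrable_indicator (measurableSet_lt measurable_const measurable_norm))

variable [InnerProductSpace ℝ E]

noncomputable def levyIntegrand (z u : E) : ℂ :=
  Complex.exp (Complex.I * (⟪u, z⟫ : ℝ)) - 1 -
    Complex.I * (⟪u, z⟫ : ℝ) * Set.indicator {u : E | ‖u‖ ≤ 1} (fun _ => (1 : ℂ)) u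

@[simp]
lemma levyIntegrand_zero_left (u : E) : levyIntegrand 0 u = 0 := by
  simp [levyIntegrand]

lemma norm_levyIntegrand_sub_le_of_norm_le_one {β : ℝ} (hβ1 : β ≤ 1) {z₁ z₂ u : E}
    (hz₁ : ‖z₁‖ ≤ 1 / 2) (hz₂ : ‖z₂‖ ≤ 1 / 2) (hu : ‖u‖ ≤ 1) :
    ‖levyIntegrand z₁ u - levyIntegrand z₂ u‖ ≤ ‖u‖ ^ 2 * ‖z₁ - z₂‖ ^ β := by
  have hinner (z : E) (hz : ‖z‖ ≤ 1 / 2) : |⟪u, z⟫| ≤ ‖u‖ / 2 :=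
    (abs_real_inner_le_norm u z).trans (by nlinarith [norm_nonneg u])
  have hdist : ‖z₁ - z₂‖ ≤ 1 := (norm_sub_le _ _).trans (by linarith)
  have hsub : |⟪u, z₁⟫ - ⟪u, z₂⟫| ≤ ‖u‖ * ‖z₁ - z₂‖ := by
    rw [← inner_sub_right]; exact abs_real_inner_le_norm u _
  simp only [levyIntegrand, Set.indicator_of_mem (show u ∈ {u : E | ‖u‖ ≤ 1} from hu), mul_one]
  calc _ ≤ ‖u‖ / 2 * |⟪u, z₁⟫ - ⟪u, z₂⟫| :=
        norm_exp_I_mul_sub_one_sub_sub_le (hinner z₁ hz₁) (hinner z₂ hz₂)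
    _ ≤ ‖u‖ / 2 * (‖u‖ * ‖z₁ - z₂‖) := by gcongr
    _ ≤ ‖u‖ ^ 2 * ‖z₁ - z₂‖ ^ β := by
        have := Real.self_le_rpow_of_le_one (norm_nonneg _) hdist hβ1
        nlinarith [norm_nonneg u, norm_nonneg (z₁ - z₂)]

lemma norm_levyIntegrand_sub_le_of_one_lt {β : ℝ} (hβ0 : 0 ≤ β) (hβ1 : β ≤ 1) {z₁ z₂ u : E}
    (hu : 1 < ‖u‖) :
    ‖levyIntegrand z₁ u - levyIntegrand z₂ u‖ ≤ 2 * ‖u‖ ^ β * ‖z₁ - z₂‖ ^ β := by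
  have hsub : |⟪u, z₁⟫ - ⟪u, z₂⟫| ≤ ‖u‖ * ‖z₁ - z₂‖ := by
    rw [← inner_sub_right]; exact abs_real_inner_le_norm u _
  simp only [levyIntegrand,
    Set.indicator_of_notMem (show u ∉ {u : E | ‖u‖ ≤ 1} from not_le.mpr hu), mul_zero,
    sub_zero, sub_sub_sub_cancel_right]
  calc _ ≤ 2 * |⟪u, z₁⟫ - ⟪u, z₂⟫| ^ β := norm_exp_I_mul_sub_exp_I_mul_le_rpow hβ0 hβ1 _ _
    _ ≤ 2 * (‖u‖ * ‖z₁ - z₂‖) ^ β := by gcongr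
    _ = 2 * ‖u‖ ^ β * ‖z₁ - z₂‖ ^ β := by
        rw [Real.mul_rpow (norm_nonneg _) (norm_nonneg _), mul_assoc]

lemma norm_levyIntegrand_sub_le {β : ℝ} (hβ0 : 0 ≤ β) (hβ1 : β ≤ 1) {z₁ z₂ : E}
    (hz₁ : ‖z₁‖ ≤ 1 / 2) (hz₂ : ‖z₂‖ ≤ 1 / 2) (u : E) :
    ‖levyIntegrand z₁ u - levyIntegrand z₂ u‖ ≤ 2 * levyWeight β u * ‖z₁ - z₂‖ ^ β := by
  rcases le_or_gt ‖u‖ 1 with hu | hu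
  · have hweight : levyWeight β u = ‖u‖ ^ 2 := by
      simp [levyWeight, hu.not_gt, pow_le_one₀ (norm_nonneg u) hu]
    rw [hweight]
    refine (norm_levyIntegrand_sub_le_of_norm_le_one hβ1 hz₁ hz₂ hu).trans ?_
    gcongr
    linarith [sq_nonneg ‖u‖]
  · have hweight : levyWeight β u = 1 + ‖u‖ ^ β := by
      simp [levyWeight, hu, one_le_pow₀ hu.le]
    rw [hweight]
    refine (norm_levyIntegrand_sub_le_of_one_lt hβ0 hβ1 hu).trans ?_
    gcongr
    linarith

variable [MeasurableSpace E] [OpensMeasurableSpace E]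

lemma measurable_levyIntegrand (z : E) : Measurable (levyIntegrand z) := by
  have hball : MeasurableSet {u : E | ‖u‖ ≤ 1} :=
    measurableSet_le measurable_norm measurable_const
  unfold levyIntegrand
  fun_prop (disch := exact hball)

lemma integrable_levyIntegrand {ν : Measure E} {β : ℝ} (hβ0 : 0 ≤ β) (hβ1 : β ≤ 1)
    (hν2 : ∫⁻ z, ENNReal.ofReal (min 1 (‖z‖ ^ 2)) ∂ν ≠ ∞)
    (hνβ : ∫⁻ z in {z : E | 1 < ‖z‖}, ENNReal.ofReal (‖z‖ ^ β) ∂ν ≠ ∞)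
    {z : E} (hz : ‖z‖ ≤ 1 / 2) :
    Integrable (levyIntegrand z) ν := by
  refine ((integrable_levyWeight hν2 hνβ).const_mul 2 |>.mul_const (‖z‖ ^ β)).mono'
    (measurable_levyIntegrand z).aestronglyMeasurable (ae_of_all _ fun u => ?_)
  simpa using norm_levyIntegrand_sub_le hβ0 hβ1 hz (z₂ := 0) (by simp) u

theorem norm_integral_levyIntegrand_sub_le {ν : Measure E} {β : ℝ} (hβ0 : 0 ≤ β) (hβ1 : β ≤ 1)
    (hν2 : ∫⁻ z, ENNReal.ofReal (min 1 (‖z‖ ^ 2)) ∂ν ≠ ∞)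
    (hνβ : ∫⁻ z in {z : E | 1 < ‖z‖}, ENNReal.ofReal (‖z‖ ^ β) ∂ν ≠ ∞)
    {z₁ z₂ : E} (hz₁ : ‖z₁‖ ≤ 1 / 2) (hz₂ : ‖z₂‖ ≤ 1 / 2) :
    ‖∫ u, levyIntegrand z₁ u ∂ν - ∫ u, levyIntegrand z₂ u ∂ν‖ ≤
      2 * (∫ u, levyWeight β u ∂ν) * ‖z₁ - z₂‖ ^ β := by
  rw [← integral_sub (integrable_levyIntegrand hβ0 hβ1 hν2 hνβ hz₁)
    (integrable_levyIntegrand hβ0 hβ1 hν2 hνβ hz₂), ← integral_const_mul, ← integral_mul_const]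
  exact norm_integral_le_of_norm_le ((integrable_levyWeight hν2 hνβ).const_mul 2 |>.mul_const _)
    (ae_of_all _ (norm_levyIntegrand_sub_le hβ0 hβ1 hz₁ hz₂))

end LevyIntegrand

lemma levyCharExp_eq_integral_levyIntegrand {d : ℕ} (ν : Measure (EuclideanSpace ℝ (Fin d)))
    (z : EuclideanSpace ℝ (Fin d)) : levyCharExp ν z = ∫ u, levyIntegrand z u ∂ν :=
  rfl

theorem stmt7_general {d : ℕ} (ν : Measure (EuclideanSpace ℝ (Fin d)))
    (hν2 : ∫⁻ z, ENNReal.ofReal (min 1 (‖z‖ ^ 2)) ∂ν < ⊤)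
    (β : ℝ) (hβ : β ∈ Set.Ioo (0 : ℝ) 1)
    (hνβ : ∫⁻ z in {z : EuclideanSpace ℝ (Fin d) | 1 < ‖z‖}, ENNReal.ofReal (‖z‖ ^ β) ∂ν < ⊤) :
    ∃ C : ℝ, ∀ z₁ z₂ : EuclideanSpace ℝ (Fin d), ‖z₁‖ ≤ 1 / 2 → ‖z₂‖ ≤ 1 / 2 →
      ‖levyCharExp ν z₁ - levyCharExp ν z₂‖ ≤ C * ‖z₁ - z₂‖ ^ β := by
  refine ⟨2 * ∫ u, levyWeight β u ∂ν, fun z₁ z₂ hz₁ hz₂ => ?_⟩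
  simp only [levyCharExp_eq_integral_levyIntegrand]
  exact norm_integral_levyIntegrand_sub_le hβ.1.le hβ.2.le hν2.ne hνβ.ne hz₁ hz₂

theorem stmt7 {d : ℕ} (ν : Measure (EuclideanSpace ℝ (Fin d)))
    (hν0 : ν {0} = 0)
    (hν2 : ∫⁻ z, ENNReal.ofReal (min 1 (‖z‖ ^ 2)) ∂ν < ⊤)
    (β : ℝ) (hβ : β ∈ Set.Ioo (0 : ℝ) 1)
    (hνβ : ∫⁻ z in {z : EuclideanSpace ℝ (Fin d) | 1 < ‖z‖}, ENNReal.ofReal (‖z‖ ^ β) ∂ν < ⊤) :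
    ∃ C : ℝ, ∀ z₁ z₂ : EuclideanSpace ℝ (Fin d), ‖z₁‖ ≤ 1 / 2 → ‖z₂‖ ≤ 1 / 2 →
      ‖levyCharExp ν z₁ - levyCharExp ν z₂‖ ≤ C * ‖z₁ - z₂‖ ^ β :=
  stmt7_general ν hν2 β hβ hνβ
end

section
/- Let (a_n) be positive reals with a_n → 0 and n·a_n → ∞. For n ∈ ℕ define f_n(z) = (1/n) ∑_{j=1}^n g_n(z - j/n), where g_n(z) = (1/a_n) 1_{[0,a_n]}(z). Then f_n(z) → 1_{(0,1]}(z) as n → ∞ for every z ∈ ℝ; consequently, by Scheffé's lemma, ∫_ℝ |f_n(z) - 1_{(0,1]}(z)| dz → 0, i.e., if X_n has density f_n and U is uniform on [0,1], the total variation distance between X_n and U converges to 0. -/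
/-!
The atoms `j / n` that contribute to `f_n(z)` are those with `z - a_n ≤ j / n ≤ z`. For
`0 < z ≤ 1` and `n` large these are exactly the integers `j` in `[n (z - a_n), n z]`, an interval of
length `n a_n`, so `f_n(z)` lies within `1 / (n a_n) → 0` of `1`. Outside `(0, 1 + a_n]` the density
vanishes. Since every `f_n` and the limit are probability densities, Scheffé's lemma turns the
pointwise convergence into `L¹` convergence.
-/

open MeasureTheory Filter

/-- The density of `X_n = U_n + R_n`, where `U_n` is uniform on `{j/n : j = 1,…,n}`
and `R_n` is uniform on `[0, a n]`, independent of `U_n`. -/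
noncomputable def convDensity (a : ℕ → ℝ) (n : ℕ) (z : ℝ) : ℝ :=
  (1 / (n : ℝ)) * ∑ j ∈ Finset.Icc 1 n,
    Set.indicator (Set.Icc (0 : ℝ) (a n)) (fun _ => 1 / a n) (z - (j : ℝ) / (n : ℝ))

open scoped Topology

/-- Scheffé's lemma. As `|F - f| = F + f - 2 min F f`, it reduces to dominated convergence for
`min (F n) f`, which is bounded by `|f|` because `F n ≥ 0`. -/
theorem tendsto_integral_abs_sub_of_tendsto_ae {α ι : Type*} [MeasurableSpace α] {μ : Measure α}
    {l : Filter ι} [l.IsCountablyGenerated] {F : ι → α → ℝ} {f : α → ℝ}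
    (hF_nonneg : ∀ n, 0 ≤ᵐ[μ] F n) (hF_int : ∀ n, Integrable (F n) μ) (hf_int : Integrable f μ)
    (h_integral : ∀ᶠ n in l, ∫ x, F n x ∂μ = ∫ x, f x ∂μ)
    (h_lim : ∀ᵐ x ∂μ, Tendsto (fun n => F n x) l (𝓝 (f x))) :
    Tendsto (fun n => ∫ x, |F n x - f x| ∂μ) l (𝓝 0) := by
  have h_min_int : ∀ n, Integrable (fun x => min (F n x) (f x)) μ :=
    fun n => (hF_int n).inf hf_int
  have h_min_lim : Tendsto (fun n => ∫ x, min (F n x) (f x) ∂μ) l (𝓝 (∫ x, f x ∂μ)) := by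
    refine tendsto_integral_filter_of_dominated_convergence (fun x => |f x|)
      (.of_forall fun n => (h_min_int n).aestronglyMeasurable)
      (.of_forall fun n => ?_) hf_int.abs ?_
    · filter_upwards [hF_nonneg n] with x (hx : 0 ≤ F n x)
      rw [Real.norm_eq_abs, abs_le]
      exact ⟨le_min (by linarith [abs_nonneg (f x)]) (neg_abs_le _),
        (min_le_right _ _).trans (le_abs_self _)⟩
    · filter_upwards [h_lim] with x hx
      simpa using hx.min (tendsto_const_nhds (x := f x))
  have h_abs (x y : ℝ) : |x - y| = x + y - 2 * min x y := by
    linarith [max_sub_min_eq_abs' x y, min_add_max x y]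
  have h_eq : ∀ᶠ n in l,
      ∫ x, |F n x - f x| ∂μ = 2 * (∫ x, f x ∂μ - ∫ x, min (F n x) (f x) ∂μ) := by
    filter_upwards [h_integral] with n hn
    simp_rw [h_abs]
    rw [integral_sub (f := fun x => F n x + f x) ((hF_int n).add hf_int)
        ((h_min_int n).const_mul 2),
      integral_add (hF_int n) hf_int, integral_const_mul, hn]
    ring
  refine Tendsto.congr' (h_eq.mono fun n h => h.symm) ?_
  simpa using (tendsto_const_nhds (x := ∫ x, f x ∂μ)).sub h_min_lim |>.const_mul 2

theorem abs_card_Icc_ceil_floor_sub_le {x y : ℝ} (hx : 0 ≤ x) (hxy : x ≤ y) :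
    |((Finset.Icc ⌈x⌉₊ ⌊y⌋₊).card : ℝ) - (y - x)| ≤ 1 := by
  have hy : 0 ≤ y := hx.trans hxy
  have h_floor := Nat.sub_one_lt_floor y
  have h_ceil := Nat.ceil_lt_add_one hx
  have h_le : ⌈x⌉₊ ≤ ⌊y⌋₊ + 1 := by
    have : (⌈x⌉₊ : ℝ) < ⌊y⌋₊ + 2 := by linarith
    have : ⌈x⌉₊ < ⌊y⌋₊ + 2 := by exact_mod_cast this
    omega
  rw [Nat.card_Icc, Nat.cast_sub h_le, abs_le]
  push_cast
  constructor <;> linarith [Nat.floor_le hy, Nat.le_ceil x]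

theorem convDensity_eq_zero_of_notMem {a : ℕ → ℝ} {n : ℕ} {z : ℝ}
    (hz : z ∉ Set.Ioc 0 (1 + a n)) : convDensity a n z = 0 := by
  refine mul_eq_zero_of_right _ (Finset.sum_eq_zero fun j hj => Set.indicator_of_notMem ?_ _)
  rintro ⟨h0, ha⟩
  obtain ⟨hj1, hjn⟩ := Finset.mem_Icc.mp hj
  have hn : (0 : ℝ) < n := by exact_mod_cast hj1.trans hjn
  have hj_pos : 0 < (j : ℝ) / n := by positivity
  have hj_le : (j : ℝ) / n ≤ 1 := (div_le_one hn).mpr (by exact_mod_cast hjn)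
  exact hz ⟨by linarith, by linarith⟩

theorem convDensity_eq_card_div (a : ℕ → ℝ) (n : ℕ) (z : ℝ) :
    convDensity a n z =
      ((Finset.Icc 1 n).filter fun j : ℕ => z - j / n ∈ Set.Icc 0 (a n)).card / (n * a n) := by
  rw [convDensity,
    ← Finset.sum_filter_add_sum_filter_not _ (fun j : ℕ => z - j / n ∈ Set.Icc 0 (a n)),
    Finset.sum_congr rfl fun j hj => Set.indicator_of_mem (Finset.mem_filter.mp hj).2 _,
    Finset.sum_congr rfl fun j hj => Set.indicator_of_notMem (Finset.mem_filter.mp hj).2 _]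
  simp only [Finset.sum_const, nsmul_eq_mul, smul_zero, add_zero]
  field_simp

theorem filter_mem_Icc_eq_Icc_ceil_floor {a z : ℝ} {n : ℕ} (hn : 0 < n) (ha : 0 ≤ a)
    (haz : a < z) (hz : z ≤ 1) :
    ((Finset.Icc 1 n).filter fun j : ℕ => z - j / n ∈ Set.Icc 0 a) =
      Finset.Icc ⌈n * (z - a)⌉₊ ⌊n * z⌋₊ := by
  have hn' : (0 : ℝ) < n := by exact_mod_cast hn
  ext j
  simp only [Finset.mem_filter, Finset.mem_Icc, Set.mem_Icc, Nat.ceil_le,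
    Nat.le_floor_iff (by nlinarith : (0 : ℝ) ≤ n * z), sub_nonneg, div_le_iff₀ hn']
  rw [sub_le_comm, le_div_iff₀ hn']
  constructor
  · rintro ⟨-, hj_upper, hj_lower⟩
    constructor <;> linarith
  · rintro ⟨hj_lower, hj_upper⟩
    have hj_pos : (0 : ℝ) < j := by nlinarith
    have hj_le : (j : ℝ) ≤ n := by nlinarith
    exact ⟨⟨by exact_mod_cast hj_pos, by exact_mod_cast hj_le⟩, by linarith, by linarith⟩

theorem abs_convDensity_sub_one_le {a : ℕ → ℝ} {n : ℕ} {z : ℝ} (hn : 0 < n) (ha : 0 < a n)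
    (haz : a n < z) (hz : z ≤ 1) : |convDensity a n z - 1| ≤ (n * a n)⁻¹ := by
  have hna : (0 : ℝ) < n * a n := by positivity
  have h_count := abs_card_Icc_ceil_floor_sub_le (x := n * (z - a n)) (y := n * z)
    (by nlinarith) (by nlinarith)
  rw [convDensity_eq_card_div, filter_mem_Icc_eq_Icc_ceil_floor hn ha.le haz hz]
  rw [show n * z - n * (z - a n) = (n * a n : ℝ) by ring] at h_count
  rwa [← div_self hna.ne', ← sub_div, abs_div, abs_of_pos hna, div_le_iff₀ hna,
    inv_mul_cancel₀ hna.ne']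

theorem tendsto_convDensity {a : ℕ → ℝ} (ha : ∀ n, 0 < a n) (ha0 : Tendsto a atTop (𝓝 0))
    (hna : Tendsto (fun n : ℕ => (n : ℝ) * a n) atTop atTop) (z : ℝ) :
    Tendsto (fun n => convDensity a n z) atTop
      (𝓝 (Set.indicator (Set.Ioc 0 1) (fun _ => 1) z)) := by
  by_cases hz : z ∈ Set.Ioc 0 1
  · rw [Set.indicator_of_mem hz, tendsto_iff_norm_sub_tendsto_zero]
    refine squeeze_zero' (.of_forall fun n => norm_nonneg _) ?_ hna.inv_tendsto_atTop
    filter_upwards [eventually_gt_atTop 0, ha0.eventually_lt_const hz.1] with n hn haz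
    exact abs_convDensity_sub_one_le hn (ha n) haz hz.2
  · rw [Set.indicator_of_notMem hz]
    refine tendsto_const_nhds.congr' ?_
    have h_out : ∀ᶠ n in atTop, z ∉ Set.Ioc 0 (1 + a n) := by
      rcases le_or_gt z 0 with hz0 | hz0
      · exact .of_forall fun n h => hz0.not_gt h.1
      · have hz1 : 1 < z := lt_of_not_ge fun h => hz ⟨hz0, h⟩
        filter_upwards [ha0.eventually_lt_const (sub_pos.mpr hz1)] with n hn h
        linarith [h.2]
    filter_upwards [h_out] with n hn
    exact (convDensity_eq_zero_of_notMem hn).symm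

theorem integrable_indicator_Icc_comp_sub (c b t : ℝ) :
    Integrable fun z => Set.indicator (Set.Icc (0 : ℝ) c) (fun _ => b) (z - t) :=
  ((integrable_indicator_iff measurableSet_Icc).mpr
    (integrableOn_const (by simp))).comp_sub_right t

theorem integral_indicator_Icc_one_div_comp_sub {c : ℝ} (hc : 0 < c) (t : ℝ) :
    ∫ z, Set.indicator (Set.Icc (0 : ℝ) c) (fun _ => 1 / c) (z - t) = 1 := by
  rw [integral_sub_right_eq_self (Set.indicator (Set.Icc (0 : ℝ) c) fun _ => 1 / c) t,
    integral_indicator_const _ measurableSet_Icc]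
  simp [hc.le, hc.ne']

theorem integrable_convDensity (a : ℕ → ℝ) (n : ℕ) : Integrable (convDensity a n) :=
  (integrable_finsetSum _ fun _ _ => integrable_indicator_Icc_comp_sub _ _ _).const_mul _

theorem integral_convDensity {a : ℕ → ℝ} {n : ℕ} (hn : 0 < n) (ha : 0 < a n) :
    ∫ z, convDensity a n z = 1 := by
  unfold convDensity
  rw [integral_const_mul,
    integral_finsetSum _ fun _ _ => integrable_indicator_Icc_comp_sub _ _ _]
  simp only [integral_indicator_Icc_one_div_comp_sub ha, Finset.sum_const, Nat.card_Icc,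
    nsmul_eq_mul, mul_one, add_tsub_cancel_right]
  field_simp

theorem convDensity_nonneg {a : ℕ → ℝ} {n : ℕ} (ha : 0 ≤ a n) (z : ℝ) : 0 ≤ convDensity a n z :=
  mul_nonneg (by positivity) <| Finset.sum_nonneg fun _ _ =>
    Set.indicator_nonneg (fun _ _ => by positivity) _

theorem stmt11 (a : ℕ → ℝ) (hapos : ∀ n, 0 < a n)
    (ha0 : Tendsto a atTop (nhds 0))
    (hna : Tendsto (fun n : ℕ => (n : ℝ) * a n) atTop atTop) :
    (∀ z : ℝ, Tendsto (fun n => convDensity a n z) atTop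
        (nhds (Set.indicator (Set.Ioc (0 : ℝ) 1) (fun _ => (1 : ℝ)) z))) ∧
    Tendsto (fun n => ∫ z : ℝ,
        |convDensity a n z - Set.indicator (Set.Ioc (0 : ℝ) 1) (fun _ => (1 : ℝ)) z|)
      atTop (nhds 0) := by
  have h_lim := tendsto_convDensity hapos ha0 hna
  refine ⟨h_lim, tendsto_integral_abs_sub_of_tendsto_ae
    (fun n => .of_forall (convDensity_nonneg (hapos n).le)) (integrable_convDensity a)
    ((integrable_indicator_iff measurableSet_Ioc).mpr (integrableOn_const (by simp)))
    ?_ (.of_forall h_lim)⟩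
  filter_upwards [eventually_gt_atTop 0] with n hn
  rw [integral_convDensity hn (hapos n), integral_indicator_const _ measurableSet_Ioc]
  simp
end

section
/- Let ν be a Lévy measure on ℝ^d which on the unit ball has the polar decomposition ν₀(A) = ∫_{S^{d-1}} ∫₀¹ 1_A(rθ) q(r,θ) dr Λ(dθ), where Λ is a finite measure on the unit sphere and q : (0,1] × S^{d-1} → (0,∞). Suppose sup_{θ} |r^{1+α} q(r,θ) - c₀(θ)| → 0 as r → 0 for some α ∈ (0,2) and some c₀ with essinf_Λ c₀ > 0, and suppose m := inf_{|v̄|=1} ∫_{S^{d-1}} ⟨v̄,θ⟩² Λ(dθ) > 0. Then there exist constants c, C > 0 such that for all v ∈ ℝ^d with |v| > C: ∫_{|⟨v,z⟩| ≤ 1} |⟨v,z⟩|² ν(dz) ≥ c|v|^α. -/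
/-!
Let `u = v / ‖v‖` and `R = ‖v‖⁻¹`. Since `∫ ⟪u, θ⟫² dΛ ≥ m` and `⟪u, θ⟫² ≤ 1` on the sphere, the
directions `Θ = {θ | s ≤ ⟪u, θ⟫²}` carry `Λ`-mass at least `m / 2` for a small fixed `s`. For large
`‖v‖` the asymptotics of `q` give `q r θ ≥ (ε / 2) ‖v‖^{1+α}` for `r ∈ (R/2, R]`, so by the polar
decomposition the truncated cone `{z | R/2 < ‖z‖ ≤ R, z / ‖z‖ ∈ Θ}` has `ν`-mass at least
`(ε / 4) ‖v‖^α Λ(Θ)`. On it `|⟪v, z⟫| ≤ 1` and `⟪v, z⟫² ≥ s / 4`.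
-/

open MeasureTheory Set
open scoped RealInnerProductSpace ENNReal

section

variable {X : Type*} [MeasurableSpace X] {μ : Measure X}

theorem const_mul_measure_le_setLIntegral {S T : Set X} (hS : MeasurableSet S) (hST : S ⊆ T)
    {c : ℝ≥0∞} {g : X → ℝ≥0∞} (hg : ∀ᵐ x ∂μ, x ∈ S → c ≤ g x) :
    c * μ S ≤ ∫⁻ x in T, g x ∂μ :=
  calc c * μ S = ∫⁻ _ in S, c ∂μ := (setLIntegral_const S c).symm
    _ ≤ ∫⁻ x in S, g x ∂μ := setLIntegral_mono_ae' hS hg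
    _ ≤ ∫⁻ x in T, g x ∂μ := lintegral_mono_set hST

theorem integral_le_mul_measureReal_univ_add_measureReal_setOf_le [IsFiniteMeasure μ]
    {f : X → ℝ} (hf : Measurable f) (hf0 : 0 ≤ᵐ[μ] f) (hf1 : ∀ᵐ x ∂μ, f x ≤ 1) {s : ℝ}
    (hs : 0 ≤ s) :
    ∫ x, f x ∂μ ≤ s * μ.real univ + μ.real {x | s ≤ f x} := by
  have hS : MeasurableSet {x | s ≤ f x} := measurableSet_le measurable_const hf
  have hint : Integrable (fun x => s + {x | s ≤ f x}.indicator (fun _ => (1 : ℝ)) x) μ :=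
    (integrable_const s).add ((integrable_const 1).indicator hS)
  calc ∫ x, f x ∂μ ≤ ∫ x, (s + {x | s ≤ f x}.indicator (fun _ => (1 : ℝ)) x) ∂μ := by
        refine integral_mono_of_nonneg hf0 hint ?_
        filter_upwards [hf1] with x hx
        by_cases hxS : s ≤ f x
        · rw [indicator_of_mem (show x ∈ {x | s ≤ f x} from hxS)]
          linarith
        · rw [indicator_of_notMem (show x ∉ {x | s ≤ f x} from hxS)]
          linarith [not_le.mp hxS]
    _ = s * μ.real univ + μ.real {x | s ≤ f x} := by
        rw [integral_add (integrable_const s) ((integrable_const 1).indicator hS),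
          integral_const, integral_indicator_const _ hS, smul_eq_mul, smul_eq_mul, mul_comm, mul_one]

theorem le_div_rpow_of_le_rpow_mul {r R p a x : ℝ} (hr : 0 < r) (hrR : r ≤ R) (hp : 0 ≤ p)
    (ha : 0 ≤ a) (h : a ≤ r ^ p * x) : a / R ^ p ≤ x :=
  calc a / R ^ p ≤ a / r ^ p :=
        div_le_div_of_nonneg_left ha (Real.rpow_pos_of_pos hr p) (Real.rpow_le_rpow hr.le hrR hp)
    _ ≤ x := by rwa [div_le_iff₀' (Real.rpow_pos_of_pos hr p)]

end

section

variable {E : Type*} [NormedAddCommGroup E] [InnerProductSpace ℝ E]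

def coneAnnulus (u : E) (s R : ℝ) : Set E :=
  {z | R / 2 < ‖z‖ ∧ ‖z‖ ≤ R ∧ s * ‖z‖ ^ 2 ≤ ⟪u, z⟫ ^ 2}

theorem measurableSet_coneAnnulus [MeasurableSpace E] [OpensMeasurableSpace E] (u : E) (s R : ℝ) :
    MeasurableSet (coneAnnulus u s R) :=
  (measurableSet_lt measurable_const measurable_norm).inter <|
    (measurableSet_le measurable_norm measurable_const).inter <|
      measurableSet_le ((measurable_norm.pow_const 2).const_mul s)
        ((continuous_const.inner continuous_id).measurable.pow_const 2)

theorem coneAnnulus_subset_punctured_closedBall {u : E} {s R : ℝ} (hR : R ≤ 1) :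
    coneAnnulus u s R ⊆ {z | 0 < ‖z‖ ∧ ‖z‖ ≤ 1} := fun z ⟨h₁, h₂, _⟩ =>
  ⟨by linarith [norm_nonneg z], h₂.trans hR⟩

theorem smul_mem_coneAnnulus {u θ : E} {s R r : ℝ} (hθ : ‖θ‖ = 1) (hs : s ≤ ⟪u, θ⟫ ^ 2)
    (hr : r ∈ Ioc (R / 2) R) : r • θ ∈ coneAnnulus u s R := by
  have hr0 : 0 < r := by linarith [hr.1, hr.2]
  have hnorm : ‖r • θ‖ = r := by rw [norm_smul, hθ, mul_one, Real.norm_of_nonneg hr0.le]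
  show R / 2 < ‖r • θ‖ ∧ ‖r • θ‖ ≤ R ∧ s * ‖r • θ‖ ^ 2 ≤ ⟪u, r • θ⟫ ^ 2
  rw [hnorm, real_inner_smul_right]
  refine ⟨hr.1, hr.2, ?_⟩
  nlinarith [sq_nonneg r]

theorem abs_inner_le_one_of_mem_coneAnnulus {u v z : E} {s : ℝ}
    (hz : z ∈ coneAnnulus u s ‖v‖⁻¹) : |⟪v, z⟫| ≤ 1 :=
  calc |⟪v, z⟫| ≤ ‖v‖ * ‖z‖ := abs_real_inner_le_norm v z
    _ ≤ ‖v‖ * ‖v‖⁻¹ := mul_le_mul_of_nonneg_left hz.2.1 (norm_nonneg v)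
    _ ≤ 1 := mul_inv_le_one

theorem div_four_le_sq_inner_of_mem_coneAnnulus {v z : E} {s : ℝ} (hv : v ≠ 0) (hs : 0 ≤ s)
    (hz : z ∈ coneAnnulus (‖v‖⁻¹ • v) s ‖v‖⁻¹) : s / 4 ≤ ⟪v, z⟫ ^ 2 := by
  obtain ⟨h₁, -, h₃⟩ := hz
  have hv' : 0 < ‖v‖ := norm_pos_iff.mpr hv
  have hvz : 1 / 2 < ‖v‖ * ‖z‖ :=
    calc 1 / 2 = ‖v‖ * (‖v‖⁻¹ / 2) := by field_simp
      _ < ‖v‖ * ‖z‖ := mul_lt_mul_of_pos_left h₁ hv'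
  have hcone : s * (‖v‖ * ‖z‖) ^ 2 ≤ ⟪v, z⟫ ^ 2 := by
    rw [real_inner_smul_left, mul_pow, inv_pow, ← div_eq_inv_mul,
      le_div_iff₀ (by positivity)] at h₃
    linarith
  calc s / 4 = s * (1 / 2) ^ 2 := by ring
    _ ≤ s * (‖v‖ * ‖z‖) ^ 2 := by gcongr
    _ ≤ ⟪v, z⟫ ^ 2 := hcone

theorem ofReal_mul_measure_le_measure_coneAnnulus [MeasurableSpace E] [OpensMeasurableSpace E]
    {ν Λ : Measure E} {q : ℝ → E → ℝ}
    (hpolar : ∀ A : Set E, MeasurableSet A → A ⊆ {z | 0 < ‖z‖ ∧ ‖z‖ ≤ 1} →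
      ν A = ∫⁻ θ, (∫⁻ r in Ioc (0 : ℝ) 1,
        A.indicator (fun _ => (1 : ℝ≥0∞)) (r • θ) * ENNReal.ofReal (q r θ)) ∂Λ)
    (hsphere : ∀ᵐ θ ∂Λ, ‖θ‖ = 1) {u : E} {s R κ : ℝ} (hR : R ≤ 1)
    (hq : ∀ᵐ θ ∂Λ, ∀ r ∈ Ioc (R / 2) R, κ ≤ q r θ) :
    ENNReal.ofReal κ * ENNReal.ofReal (R / 2) * Λ {θ | s ≤ ⟪u, θ⟫ ^ 2} ≤
      ν (coneAnnulus u s R) := by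
  rw [hpolar _ (measurableSet_coneAnnulus u s R) (coneAnnulus_subset_punctured_closedBall hR),
    ← setLIntegral_univ]
  refine const_mul_measure_le_setLIntegral (measurableSet_le measurable_const
    ((continuous_const.inner continuous_id).measurable.pow_const 2)) (subset_univ _) ?_
  filter_upwards [hsphere, hq] with θ hθ hqθ hθs
  calc ENNReal.ofReal κ * ENNReal.ofReal (R / 2)
        = ENNReal.ofReal κ * volume (Ioc (R / 2) R) := by
        rw [Real.volume_Ioc]; ring_nf
    _ ≤ _ := by
      refine const_mul_measure_le_setLIntegral (T := Ioc 0 1) measurableSet_Ioc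
        (fun r hr => ⟨by linarith [hr.1, hr.2], hr.2.trans hR⟩) (ae_of_all _ fun r hr => ?_)
      rw [indicator_of_mem (smul_mem_coneAnnulus hθ hθs hr), one_mul]
      exact ENNReal.ofReal_le_ofReal (hqθ r hr)

theorem half_le_measureReal_setOf_le_sq_inner [MeasurableSpace E] [OpensMeasurableSpace E]
    {Λ : Measure E} [IsFiniteMeasure Λ] (hsphere : ∀ᵐ θ ∂Λ, ‖θ‖ = 1) {u : E}
    (hu : ‖u‖ = 1) {m : ℝ} (hm0 : 0 ≤ m) (hm : m ≤ ∫ θ, ⟪u, θ⟫ ^ 2 ∂Λ) :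
    m / 2 ≤ Λ.real {θ | m / (2 * (Λ.real univ + 1)) ≤ ⟪u, θ⟫ ^ 2} := by
  have hbound := integral_le_mul_measureReal_univ_add_measureReal_setOf_le
    (f := fun θ => ⟪u, θ⟫ ^ 2) ((continuous_const.inner continuous_id).measurable.pow_const 2)
    (ae_of_all _ fun θ => sq_nonneg _)
    (by
      filter_upwards [hsphere] with θ hθ
      rw [sq_le_one_iff_abs_le_one]
      simpa [hu, hθ] using abs_real_inner_le_norm u θ)
    (by positivity : 0 ≤ m / (2 * (Λ.real univ + 1)))
  have hL : 0 ≤ Λ.real univ := measureReal_nonneg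
  have hsL : m / (2 * (Λ.real univ + 1)) * Λ.real univ ≤ m / 2 := by
    rw [div_mul_eq_mul_div, div_le_div_iff₀ (by positivity) two_pos]
    nlinarith
  linarith

end

theorem stmt12_general {d : ℕ}
    (ν Λ : Measure (EuclideanSpace ℝ (Fin d))) [IsFiniteMeasure Λ]
    (hΛsphere : Λ {θ : EuclideanSpace ℝ (Fin d) | ‖θ‖ ≠ 1} = 0)
    (q : ℝ → EuclideanSpace ℝ (Fin d) → ℝ)
    (α : ℝ) (hα : α ∈ Set.Ioo (0 : ℝ) 2)
    (c₀ : EuclideanSpace ℝ (Fin d) → ℝ)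
    (hconv : ∀ η > (0 : ℝ), ∃ r₀ > (0 : ℝ), ∀ r ∈ Set.Ioo (0 : ℝ) r₀,
      ∀ θ : EuclideanSpace ℝ (Fin d), ‖θ‖ = 1 → |r ^ (1 + α) * q r θ - c₀ θ| < η)
    (hessinf : ∃ c > (0 : ℝ), ∀ᵐ θ ∂Λ, c ≤ c₀ θ)
    (hpolar : ∀ A : Set (EuclideanSpace ℝ (Fin d)), MeasurableSet A →
      A ⊆ {z : EuclideanSpace ℝ (Fin d) | 0 < ‖z‖ ∧ ‖z‖ ≤ 1} →
      ν A = ∫⁻ θ, (∫⁻ r in Set.Ioc (0 : ℝ) 1,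
        Set.indicator A (fun _ => (1 : ℝ≥0∞)) (r • θ) * ENNReal.ofReal (q r θ)) ∂Λ)
    (hm : ∃ m > (0 : ℝ), ∀ v : EuclideanSpace ℝ (Fin d), ‖v‖ = 1 →
      m ≤ ∫ θ, ⟪v, θ⟫ ^ 2 ∂Λ) :
    ∃ c > (0 : ℝ), ∃ C > (0 : ℝ), ∀ v : EuclideanSpace ℝ (Fin d), C < ‖v‖ →
      ENNReal.ofReal (c * ‖v‖ ^ α) ≤
        ∫⁻ z in {z : EuclideanSpace ℝ (Fin d) | |⟪v, z⟫| ≤ 1},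
          ENNReal.ofReal (⟪v, z⟫ ^ 2) ∂ν := by
  obtain ⟨ε, hε, hc₀⟩ := hessinf
  obtain ⟨m, hm, hmΛ⟩ := hm
  obtain ⟨r₀, hr₀, hq⟩ := hconv (ε / 2) (half_pos hε)
  have hsphere : ∀ᵐ θ ∂Λ, ‖θ‖ = 1 := ae_iff.mpr hΛsphere
  set s := m / (2 * (Λ.real univ + 1))
  refine ⟨s * ε * m / 32, by positivity, max 1 r₀⁻¹, by positivity, fun v hv => ?_⟩
  have hv1 : 1 < ‖v‖ := (le_max_left _ _).trans_lt hv
  have hv0 : 0 < ‖v‖ := one_pos.trans hv1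
  have hvr : ‖v‖⁻¹ < r₀ := inv_lt_of_inv_lt₀ hr₀ ((le_max_right _ _).trans_lt hv)
  have hu : ‖‖v‖⁻¹ • v‖ = 1 := norm_smul_inv_norm (norm_pos_iff.mp hv0)
  have hqθ : ∀ᵐ θ ∂Λ, ∀ r ∈ Ioc (‖v‖⁻¹ / 2) ‖v‖⁻¹, ε / 2 / ‖v‖⁻¹ ^ (1 + α) ≤ q r θ := by
    filter_upwards [hsphere, hc₀] with θ hθ hcθ r hr
    have hr0 : 0 < r := by linarith [hr.1, hr.2]
    have := abs_lt.mp (hq r ⟨hr0, hr.2.trans_lt hvr⟩ θ hθ)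
    exact le_div_rpow_of_le_rpow_mul hr0 hr.2 (by linarith [hα.1]) (by positivity) (by linarith)
  have hcone := ofReal_mul_measure_le_measure_coneAnnulus (u := ‖v‖⁻¹ • v) (s := s) hpolar
    hsphere (inv_le_one_of_one_le₀ hv1.le) hqθ
  have hΘ := ENNReal.ofReal_le_of_le_toReal
    (half_le_measureReal_setOf_le_sq_inner hsphere hu hm.le (hmΛ _ hu))
  calc ENNReal.ofReal (s * ε * m / 32 * ‖v‖ ^ α)
      = ENNReal.ofReal (s / 4) * (ENNReal.ofReal (ε / 2 / ‖v‖⁻¹ ^ (1 + α)) *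
          ENNReal.ofReal (‖v‖⁻¹ / 2) * ENNReal.ofReal (m / 2)) := by
        rw [← ENNReal.ofReal_mul (by positivity), ← ENNReal.ofReal_mul (by positivity),
          ← ENNReal.ofReal_mul (by positivity), Real.inv_rpow hv0.le, Real.rpow_add hv0,
          Real.rpow_one]
        congr 1
        field_simp
        ring
    _ ≤ ENNReal.ofReal (s / 4) * ν (coneAnnulus (‖v‖⁻¹ • v) s ‖v‖⁻¹) := by
        gcongr
        exact (mul_le_mul_right hΘ _).trans hcone
    _ ≤ _ := const_mul_measure_le_setLIntegral (measurableSet_coneAnnulus _ _ _)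
        (fun z hz => abs_inner_le_one_of_mem_coneAnnulus hz)
        (ae_of_all _ fun z hz => ENNReal.ofReal_le_ofReal
          (div_four_le_sq_inner_of_mem_coneAnnulus (norm_pos_iff.mp hv0) (by positivity) hz))

theorem stmt12 {d : ℕ}
    (ν Λ : Measure (EuclideanSpace ℝ (Fin d))) [IsFiniteMeasure Λ]
    (hΛsphere : Λ {θ : EuclideanSpace ℝ (Fin d) | ‖θ‖ ≠ 1} = 0)
    (q : ℝ → EuclideanSpace ℝ (Fin d) → ℝ)
    (hq : ∀ r ∈ Set.Ioc (0 : ℝ) 1, ∀ θ : EuclideanSpace ℝ (Fin d), ‖θ‖ = 1 → 0 < q r θ)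
    (α : ℝ) (hα : α ∈ Set.Ioo (0 : ℝ) 2)
    (c₀ : EuclideanSpace ℝ (Fin d) → ℝ)
    (hconv : ∀ η > (0 : ℝ), ∃ r₀ > (0 : ℝ), ∀ r ∈ Set.Ioo (0 : ℝ) r₀,
      ∀ θ : EuclideanSpace ℝ (Fin d), ‖θ‖ = 1 → |r ^ (1 + α) * q r θ - c₀ θ| < η)
    (hessinf : ∃ c > (0 : ℝ), ∀ᵐ θ ∂Λ, c ≤ c₀ θ)
    (hpolar : ∀ A : Set (EuclideanSpace ℝ (Fin d)), MeasurableSet A →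
      A ⊆ {z : EuclideanSpace ℝ (Fin d) | 0 < ‖z‖ ∧ ‖z‖ ≤ 1} →
      ν A = ∫⁻ θ, (∫⁻ r in Set.Ioc (0 : ℝ) 1,
        Set.indicator A (fun _ => (1 : ℝ≥0∞)) (r • θ) * ENNReal.ofReal (q r θ)) ∂Λ)
    (hm : ∃ m > (0 : ℝ), ∀ v : EuclideanSpace ℝ (Fin d), ‖v‖ = 1 →
      m ≤ ∫ θ, ⟪v, θ⟫ ^ 2 ∂Λ) :
    ∃ c > (0 : ℝ), ∃ C > (0 : ℝ), ∀ v : EuclideanSpace ℝ (Fin d), C < ‖v‖ →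
      ENNReal.ofReal (c * ‖v‖ ^ α) ≤
        ∫⁻ z in {z : EuclideanSpace ℝ (Fin d) | |⟪v, z⟫| ≤ 1},
          ENNReal.ofReal (⟪v, z⟫ ^ 2) ∂ν :=
  stmt12_general ν Λ hΛsphere q α hα c₀ hconv hessinf hpolar hm
end

section
/- Let ν be a Lévy measure on ℝ^d admitting near the origin the polar decomposition ν(A ∩ B₁(0)) = ∫_{S^{d-1}} ∫₀¹ 1_A(rθ) q(r,θ) dr Λ(dθ) with Λ a finite measure on S^{d-1}, q > 0, c₀ : S^{d-1} → (0,∞) in L¹(Λ), α ∈ (0,2), and sup_θ |r^{1+α} q(r,θ) - c₀(θ)| → 0 as r → 0. Then lim_{h→0⁺} h^{α-2} ∫_{|z| ≤ h} |z|² ν(dz) = (1/(2-α)) ∫_{S^{d-1}} c₀(θ) Λ(dθ), and this limit is strictly positive. -/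
open MeasureTheory Filter
open scoped RealInnerProductSpace ENNReal

open Set

/-!
Near the origin `ν` is a polar product whose radial density satisfies
`q(r, θ) ≈ c₀(θ) r^{-1-α}` uniformly in `θ`. Hence, for `h` small, the mass of every annulus
`{t < ‖z‖ ≤ h}` lies between `(∫ (c₀ ∓ η) dΛ) (t^{-α} - h^{-α}) / α`. Since `q` is not assumed
measurable, only monotonicity of `∫⁻` is available, and the annuli are the right test sets: the
layer-cake formula `∫_{‖z‖ ≤ h} ‖z‖² dν = ∫₀^∞ 2t ν{t < ‖z‖ ≤ h} dt` turns the annulus bounds into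
`∫_{‖z‖ ≤ h} ‖z‖² dν ∈ (∫ c₀ dΛ ∓ η Λ(univ)) h^{2-α} / (2 - α)`, and `η → 0` gives the limit.
It is positive because `c₀ > 0` on the sphere, which carries the nonzero measure `Λ`.
-/

theorem integral_pos_of_ae_pos {Ω : Type*} [MeasurableSpace Ω] {μ : Measure Ω} {f : Ω → ℝ}
    (hμ : μ ≠ 0) (hf : Integrable f μ) (hpos : ∀ᵐ x ∂μ, 0 < f x) : 0 < ∫ x, f x ∂μ := by
  rw [integral_pos_iff_support_of_nonneg_ae (hpos.mono fun _ hx => hx.le) hf]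
  have hnull : μ (Function.support f)ᶜ = 0 := ae_iff.mp (hpos.mono fun _ hx => hx.ne')
  calc 0 < μ univ := Measure.measure_univ_pos.mpr hμ
    _ ≤ μ (Function.support f) + μ (Function.support f)ᶜ := measure_univ_le_add_compl _
    _ = μ (Function.support f) := by rw [hnull, add_zero]

theorem integral_le_toReal_lintegral_ofReal {Ω : Type*} [MeasurableSpace Ω] {μ : Measure Ω}
    {f : Ω → ℝ} (hf : Integrable f μ) : ∫ x, f x ∂μ ≤ (∫⁻ x, ENNReal.ofReal (f x) ∂μ).toReal := by
  rw [integral_eq_lintegral_pos_part_sub_lintegral_neg_part hf]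
  exact sub_le_self _ ENNReal.toReal_nonneg

theorem tendsto_of_forall_eventually_abs_sub_le_mul {ι : Type*} {l : Filter ι} {f : ι → ℝ}
    {L K : ℝ} (h : ∀ η > 0, ∀ᶠ x in l, |f x - L| ≤ η * K) : Tendsto f l (nhds L) := by
  rw [Metric.tendsto_nhds]
  intro ε hε
  filter_upwards [h (ε / (|K| + 1)) (by positivity)] with x hx
  rw [Real.dist_eq]
  calc |f x - L| ≤ ε / (|K| + 1) * |K| := hx.trans (by gcongr; exact le_abs_self K)
    _ < ε := by
      rw [div_mul_eq_mul_div, div_lt_iff₀ (by positivity)]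
      nlinarith

theorem mem_Icc_of_abs_rpow_mul_sub_le {r x c η s : ℝ} (hr : 0 < r) (h : |r ^ s * x - c| ≤ η) :
    x ∈ Icc ((c - η) * r ^ (-s)) ((c + η) * r ^ (-s)) := by
  have hx : x = r ^ s * x * r ^ (-s) := by
    rw [mul_comm (r ^ s), mul_assoc, ← Real.rpow_add hr, add_neg_cancel, Real.rpow_zero, mul_one]
  have hpos : 0 ≤ r ^ (-s) := Real.rpow_nonneg hr.le _
  obtain ⟨hlo, hhi⟩ := abs_le.mp h
  rw [hx]
  exact ⟨mul_le_mul_of_nonneg_right (by linarith) hpos,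
    mul_le_mul_of_nonneg_right (by linarith) hpos⟩

theorem lintegral_Ioc_rpow_neg_one_sub {α a b : ℝ} (hα : 0 < α) (hb : 0 < b) (ha : 0 < a) :
    ∫⁻ r in Ioc b a, ENNReal.ofReal (r ^ (-(1 + α))) =
      ENNReal.ofReal ((b ^ (-α) - a ^ (-α)) / α) := by
  rcases le_total a b with hab | hba
  · have hpow : b ^ (-α) ≤ a ^ (-α) := Real.rpow_le_rpow_of_nonpos ha hab (by linarith)
    rw [Ioc_eq_empty (not_lt.mpr hab), Measure.restrict_empty, lintegral_zero_measure,
      ENNReal.ofReal_of_nonpos (div_nonpos_of_nonpos_of_nonneg (by linarith) hα.le)]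
  · have h0_notMem : (0 : ℝ) ∉ uIcc b a := by
      rw [uIcc_of_le hba]; exact fun h0 => hb.not_ge h0.1
    have hint : IntegrableOn (fun r : ℝ => r ^ (-(1 + α))) (Ioc b a) :=
      (intervalIntegrable_iff_integrableOn_Ioc_of_le hba).mp
        (intervalIntegral.intervalIntegrable_rpow (Or.inr h0_notMem))
    rw [← ofReal_integral_eq_lintegral_ofReal hint
      ((ae_restrict_mem measurableSet_Ioc).mono fun r hr => Real.rpow_nonneg (hb.trans hr.1).le _),
      ← intervalIntegral.integral_of_le hba,
      integral_rpow (Or.inr ⟨by linarith, h0_notMem⟩)]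
    congr 1
    rw [show -(1 + α) + 1 = -α by ring]
    field_simp
    ring

theorem integral_two_div_mul_rpow_one_sub_sub_mul {α h : ℝ} (hα0 : 0 < α) (hα2 : α < 2)
    (hh : 0 < h) :
    ∫ t in (0 : ℝ)..h, 2 / α * (t ^ (1 - α) - h ^ (-α) * t) = h ^ (2 - α) / (2 - α) := by
  rw [intervalIntegral.integral_const_mul, intervalIntegral.integral_sub
    (intervalIntegral.intervalIntegrable_rpow' (by linarith))
    (intervalIntegral.intervalIntegrable_id.const_mul _),
    intervalIntegral.integral_const_mul, integral_id, integral_rpow (Or.inl (by linarith)),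
    show 1 - α + 1 = 2 - α by ring, Real.zero_rpow (by linarith),
    show h ^ 2 = h ^ (2 - α) * h ^ α by
      rw [← Real.rpow_add hh, sub_add_cancel, Real.rpow_two],
    Real.rpow_neg hh.le]
  have : h ^ α ≠ 0 := (Real.rpow_pos_of_pos hh α).ne'
  have : 2 - α ≠ 0 := by linarith
  field_simp
  ring

theorem lintegral_Ioi_tail_rpow_mul_two {α h : ℝ} (hα0 : 0 < α) (hα2 : α < 2) (hh : 0 < h) :
    ∫⁻ t in Ioi 0, ENNReal.ofReal ((t ^ (-α) - h ^ (-α)) / α) * ENNReal.ofReal (2 * t) =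
      ENNReal.ofReal (h ^ (2 - α) / (2 - α)) := by
  set g : ℝ → ℝ := fun t => 2 / α * (t ^ (1 - α) - h ^ (-α) * t)
  have hvanish : EqOn (fun t => ENNReal.ofReal ((t ^ (-α) - h ^ (-α)) / α) * ENNReal.ofReal (2 * t))
      0 (Ioi h) := fun t ht => by
    have : t ^ (-α) ≤ h ^ (-α) := Real.rpow_le_rpow_of_nonpos hh (le_of_lt ht) (by linarith)
    simp [ENNReal.ofReal_of_nonpos (div_nonpos_of_nonpos_of_nonneg (sub_nonpos.mpr this) hα0.le)]
  have htail_nonneg : ∀ t ∈ Ioc 0 h, 0 ≤ (t ^ (-α) - h ^ (-α)) / α := fun t ht =>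
    div_nonneg (sub_nonneg.mpr (Real.rpow_le_rpow_of_nonpos ht.1 ht.2 (by linarith))) hα0.le
  have hg_eq : ∀ t ∈ Ioc 0 h, g t = (t ^ (-α) - h ^ (-α)) / α * (2 * t) := fun t ht => by
    have : t ^ (1 - α) = t ^ (-α) * t := by
      rw [← Real.rpow_add_one ht.1.ne']; ring_nf
    simp only [g, this]
    ring
  have hg : EqOn (fun t => ENNReal.ofReal ((t ^ (-α) - h ^ (-α)) / α) * ENNReal.ofReal (2 * t))
      (fun t => ENNReal.ofReal (g t)) (Ioc 0 h) := fun t ht => by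
    simp only [hg_eq t ht, ENNReal.ofReal_mul (htail_nonneg t ht)]
  have hgint : IntervalIntegrable g volume 0 h :=
    ((intervalIntegral.intervalIntegrable_rpow' (by linarith)).sub
      (intervalIntegral.intervalIntegrable_id.const_mul _)).const_mul _
  have hgnn : 0 ≤ᵐ[volume.restrict (Ioc 0 h)] g :=
    (ae_restrict_mem measurableSet_Ioc).mono fun t ht => by
      rw [Pi.zero_apply, hg_eq t ht]
      exact mul_nonneg (htail_nonneg t ht) (by linarith [ht.1])
  rw [← Ioc_union_Ioi_eq_Ioi hh.le, lintegral_union measurableSet_Ioi Ioc_disjoint_Ioi_same,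
    setLIntegral_congr_fun measurableSet_Ioi hvanish, setLIntegral_congr_fun measurableSet_Ioc hg,
    Pi.zero_def, lintegral_zero, add_zero,
    ← ofReal_integral_eq_lintegral_ofReal
      ((intervalIntegrable_iff_integrableOn_Ioc_of_le hh.le).mp hgint) hgnn,
    ← intervalIntegral.integral_of_le hh.le]
  exact congrArg ENNReal.ofReal (integral_two_div_mul_rpow_one_sub_sub_mul hα0 hα2 hh)

theorem lintegral_norm_sq_le_eq_lintegral_measure_annulus {E : Type*} [NormedAddCommGroup E]
    [MeasurableSpace E] [OpensMeasurableSpace E] (ν : Measure E) (h : ℝ) :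
    ∫⁻ z in {z : E | ‖z‖ ≤ h}, ENNReal.ofReal (‖z‖ ^ 2) ∂ν =
      ∫⁻ t in Ioi 0, ν {z | t < ‖z‖ ∧ ‖z‖ ≤ h} * ENNReal.ofReal (2 * t) := by
  have hsq : ∀ x : ℝ, ∫ t in (0 : ℝ)..x, 2 * t = x ^ 2 := fun x => by
    rw [intervalIntegral.integral_const_mul, integral_id]; ring
  have hcake := lintegral_comp_eq_lintegral_meas_lt_mul (ν.restrict {z : E | ‖z‖ ≤ h})
    (f := fun z => ‖z‖) (g := fun t => 2 * t)
    (ae_of_all _ fun z => norm_nonneg z) measurable_norm.aemeasurable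
    (fun t _ => intervalIntegral.intervalIntegrable_id.const_mul 2)
    ((ae_restrict_mem measurableSet_Ioi).mono fun t ht => by linarith [mem_Ioi.mp ht])
  simp only [hsq] at hcake
  rw [hcake]
  refine setLIntegral_congr_fun measurableSet_Ioi fun t _ => ?_
  rw [Measure.restrict_apply (measurableSet_lt measurable_const measurable_norm)]
  rfl

section Polar

variable {E : Type*} [NormedAddCommGroup E] [NormedSpace ℝ E] [MeasurableSpace E]

def HasPolarDensity (ν Λ : Measure E) (q : ℝ → E → ℝ) : Prop :=
  ∀ A : Set E, MeasurableSet A → A ⊆ {z : E | 0 < ‖z‖ ∧ ‖z‖ ≤ 1} →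
    ν A = ∫⁻ θ, (∫⁻ r in Ioc (0 : ℝ) 1,
      A.indicator (fun _ => (1 : ℝ≥0∞)) (r • θ) * ENNReal.ofReal (q r θ)) ∂Λ

variable [OpensMeasurableSpace E] {ν Λ : Measure E} {q : ℝ → E → ℝ}

theorem HasPolarDensity.measure_annulus (hν : HasPolarDensity ν Λ q)
    (hΛ : ∀ᵐ θ ∂Λ, ‖θ‖ = 1) {a b : ℝ} (hb : 0 < b) (ha : a ≤ 1) :
    ν {z | b < ‖z‖ ∧ ‖z‖ ≤ a} = ∫⁻ θ, (∫⁻ r in Ioc b a, ENNReal.ofReal (q r θ)) ∂Λ := by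
  rw [hν {z | b < ‖z‖ ∧ ‖z‖ ≤ a} (measurable_norm measurableSet_Ioc)
    fun z hz => ⟨hb.trans hz.1, hz.2.trans ha⟩]
  refine lintegral_congr_ae (hΛ.mono fun θ hθ => ?_)
  have hradial : EqOn
      (fun r : ℝ => {z : E | b < ‖z‖ ∧ ‖z‖ ≤ a}.indicator (fun _ => 1) (r • θ) *
        ENNReal.ofReal (q r θ))
      ((Ioc b a).indicator fun r => ENNReal.ofReal (q r θ)) (Ioc 0 1) := fun r hr => by
    have hnorm : ‖r • θ‖ = r := by rw [norm_smul, hθ, mul_one, Real.norm_of_nonneg hr.1.le]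
    simp [indicator_apply, hnorm]
  dsimp only
  rw [setLIntegral_congr_fun measurableSet_Ioc hradial, lintegral_indicator measurableSet_Ioc,
    Measure.restrict_restrict measurableSet_Ioc,
    inter_eq_left.mpr (Ioc_subset_Ioc hb.le ha)]

theorem HasPolarDensity.measure_annulus_mem_Icc (hν : HasPolarDensity ν Λ q)
    (hΛ : ∀ᵐ θ ∂Λ, ‖θ‖ = 1) {α η a b : ℝ} {c : E → ℝ} (hα : 0 < α) (hb : 0 < b) (ha : 0 < a)
    (ha1 : a ≤ 1)
    (hq : ∀ θ : E, ‖θ‖ = 1 → ∀ r ∈ Ioc b a, |r ^ (1 + α) * q r θ - c θ| ≤ η) :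
    ν {z | b < ‖z‖ ∧ ‖z‖ ≤ a} ∈ Icc
      ((∫⁻ θ, ENNReal.ofReal (c θ - η) ∂Λ) * ENNReal.ofReal ((b ^ (-α) - a ^ (-α)) / α))
      ((∫⁻ θ, ENNReal.ofReal (c θ + η) ∂Λ) * ENNReal.ofReal ((b ^ (-α) - a ^ (-α)) / α)) := by
  have hradial : ∀ θ : E, ‖θ‖ = 1 → ∀ r ∈ Ioc b a,
      ENNReal.ofReal (q r θ) ∈ Icc
        (ENNReal.ofReal (c θ - η) * ENNReal.ofReal (r ^ (-(1 + α))))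
        (ENNReal.ofReal (c θ + η) * ENNReal.ofReal (r ^ (-(1 + α)))) := fun θ hθ r hr => by
    have hr0 : 0 < r := hb.trans hr.1
    obtain ⟨hlo, hhi⟩ := mem_Icc_of_abs_rpow_mul_sub_le hr0 (hq θ hθ r hr)
    simp only [← ENNReal.ofReal_mul' (Real.rpow_nonneg hr0.le _)]
    exact ⟨ENNReal.ofReal_le_ofReal hlo, ENNReal.ofReal_le_ofReal hhi⟩
  have hfibre : ∀ θ : E, ‖θ‖ = 1 →
      ∫⁻ r in Ioc b a, ENNReal.ofReal (q r θ) ∈ Icc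
        (ENNReal.ofReal (c θ - η) * ENNReal.ofReal ((b ^ (-α) - a ^ (-α)) / α))
        (ENNReal.ofReal (c θ + η) * ENNReal.ofReal ((b ^ (-α) - a ^ (-α)) / α)) := fun θ hθ => by
    rw [← lintegral_Ioc_rpow_neg_one_sub hα hb ha, ← lintegral_const_mul' _ _ ENNReal.ofReal_ne_top,
      ← lintegral_const_mul' _ _ ENNReal.ofReal_ne_top]
    exact ⟨setLIntegral_mono' measurableSet_Ioc fun r hr => (hradial θ hθ r hr).1,
      setLIntegral_mono' measurableSet_Ioc fun r hr => (hradial θ hθ r hr).2⟩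
  rw [hν.measure_annulus hΛ hb ha1, ← lintegral_mul_const' _ _ ENNReal.ofReal_ne_top,
    ← lintegral_mul_const' _ _ ENNReal.ofReal_ne_top]
  exact ⟨lintegral_mono_ae (hΛ.mono fun θ hθ => (hfibre θ hθ).1),
    lintegral_mono_ae (hΛ.mono fun θ hθ => (hfibre θ hθ).2)⟩

theorem HasPolarDensity.lintegral_norm_sq_le_mem_Icc (hν : HasPolarDensity ν Λ q)
    (hΛ : ∀ᵐ θ ∂Λ, ‖θ‖ = 1) {α η h : ℝ} {c : E → ℝ} (hα0 : 0 < α) (hα2 : α < 2) (hh : 0 < h)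
    (hh1 : h ≤ 1) (hq : ∀ θ : E, ‖θ‖ = 1 → ∀ r ∈ Ioc 0 h, |r ^ (1 + α) * q r θ - c θ| ≤ η) :
    ∫⁻ z in {z : E | ‖z‖ ≤ h}, ENNReal.ofReal (‖z‖ ^ 2) ∂ν ∈ Icc
      ((∫⁻ θ, ENNReal.ofReal (c θ - η) ∂Λ) * ENNReal.ofReal (h ^ (2 - α) / (2 - α)))
      ((∫⁻ θ, ENNReal.ofReal (c θ + η) ∂Λ) * ENNReal.ofReal (h ^ (2 - α) / (2 - α))) := by
  have htail : ∀ t ∈ Ioi (0 : ℝ), ν {z | t < ‖z‖ ∧ ‖z‖ ≤ h} * ENNReal.ofReal (2 * t) ∈ Icc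
      ((∫⁻ θ, ENNReal.ofReal (c θ - η) ∂Λ) *
        (ENNReal.ofReal ((t ^ (-α) - h ^ (-α)) / α) * ENNReal.ofReal (2 * t)))
      ((∫⁻ θ, ENNReal.ofReal (c θ + η) ∂Λ) *
        (ENNReal.ofReal ((t ^ (-α) - h ^ (-α)) / α) * ENNReal.ofReal (2 * t))) := fun t ht => by
    obtain ⟨hlo, hhi⟩ := hν.measure_annulus_mem_Icc hΛ hα0 ht hh hh1
      fun θ hθ r hr => hq θ hθ r ⟨ht.trans hr.1, hr.2⟩
    rw [← mul_assoc, ← mul_assoc]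
    exact ⟨mul_le_mul_left hlo _, mul_le_mul_left hhi _⟩
  have hmeas : Measurable fun t : ℝ =>
      ENNReal.ofReal ((t ^ (-α) - h ^ (-α)) / α) * ENNReal.ofReal (2 * t) := by fun_prop
  rw [lintegral_norm_sq_le_eq_lintegral_measure_annulus,
    ← lintegral_Ioi_tail_rpow_mul_two hα0 hα2 hh,
    ← lintegral_const_mul _ hmeas, ← lintegral_const_mul _ hmeas]
  exact ⟨setLIntegral_mono' measurableSet_Ioi fun t ht => (htail t ht).1,
    setLIntegral_mono' measurableSet_Ioi fun t ht => (htail t ht).2⟩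

theorem HasPolarDensity.toReal_lintegral_norm_sq_le_mem_Icc [IsFiniteMeasure Λ]
    (hν : HasPolarDensity ν Λ q) (hΛ : ∀ᵐ θ ∂Λ, ‖θ‖ = 1) {α η h : ℝ} {c : E → ℝ}
    (hc : Integrable c Λ) (hc0 : ∀ θ : E, ‖θ‖ = 1 → 0 < c θ) (hα0 : 0 < α) (hα2 : α < 2)
    (hη : 0 ≤ η) (hh : 0 < h) (hh1 : h ≤ 1)
    (hq : ∀ θ : E, ‖θ‖ = 1 → ∀ r ∈ Ioc 0 h, |r ^ (1 + α) * q r θ - c θ| ≤ η) :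
    (∫⁻ z in {z : E | ‖z‖ ≤ h}, ENNReal.ofReal (‖z‖ ^ 2) ∂ν).toReal ∈ Icc
      ((∫ θ, c θ ∂Λ - η * Λ.real univ) * (h ^ (2 - α) / (2 - α)))
      ((∫ θ, c θ ∂Λ + η * Λ.real univ) * (h ^ (2 - α) / (2 - α))) := by
  have hX : 0 ≤ h ^ (2 - α) / (2 - α) := div_nonneg (Real.rpow_nonneg hh.le _) (by linarith)
  have hc_add : Integrable (fun θ => c θ + η) Λ := hc.add (integrable_const η)
  have hc_sub : Integrable (fun θ => c θ - η) Λ := hc.sub (integrable_const η)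
  have hplus : ∫⁻ θ, ENNReal.ofReal (c θ + η) ∂Λ =
      ENNReal.ofReal (∫ θ, c θ ∂Λ + η * Λ.real univ) := by
    rw [← ofReal_integral_eq_lintegral_ofReal hc_add
      (hΛ.mono fun θ hθ => add_nonneg (hc0 θ hθ).le hη), integral_add hc (integrable_const η),
      integral_const, smul_eq_mul, mul_comm]
  have hminus : ∫ θ, c θ ∂Λ - η * Λ.real univ ≤ (∫⁻ θ, ENNReal.ofReal (c θ - η) ∂Λ).toReal := by
    have := integral_le_toReal_lintegral_ofReal hc_sub
    rwa [integral_sub hc (integrable_const η), integral_const, smul_eq_mul, mul_comm] at this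
  have hplus_nonneg : 0 ≤ ∫ θ, c θ ∂Λ + η * Λ.real univ :=
    add_nonneg (integral_nonneg_of_ae (hΛ.mono fun θ hθ => (hc0 θ hθ).le))
      (mul_nonneg hη measureReal_nonneg)
  obtain ⟨hlo, hhi⟩ := hν.lintegral_norm_sq_le_mem_Icc hΛ hα0 hα2 hh hh1 hq
  rw [hplus, ← ENNReal.ofReal_mul hplus_nonneg] at hhi
  refine ⟨(mul_le_mul_of_nonneg_right hminus hX).trans ?_,
    ENNReal.toReal_le_of_le_ofReal (mul_nonneg hplus_nonneg hX) hhi⟩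
  rw [← ENNReal.toReal_ofReal hX, ← ENNReal.toReal_mul]
  exact ENNReal.toReal_mono (ne_top_of_le_ne_top ENNReal.ofReal_ne_top hhi) hlo

theorem HasPolarDensity.abs_rpow_mul_lintegral_norm_sq_le_sub_le [IsFiniteMeasure Λ]
    (hν : HasPolarDensity ν Λ q) (hΛ : ∀ᵐ θ ∂Λ, ‖θ‖ = 1) {α η h : ℝ} {c : E → ℝ}
    (hc : Integrable c Λ) (hc0 : ∀ θ : E, ‖θ‖ = 1 → 0 < c θ) (hα0 : 0 < α) (hα2 : α < 2)
    (hη : 0 ≤ η) (hh : 0 < h) (hh1 : h ≤ 1)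
    (hq : ∀ θ : E, ‖θ‖ = 1 → ∀ r ∈ Ioc 0 h, |r ^ (1 + α) * q r θ - c θ| ≤ η) :
    |h ^ (α - 2) * (∫⁻ z in {z : E | ‖z‖ ≤ h}, ENNReal.ofReal (‖z‖ ^ 2) ∂ν).toReal -
        1 / (2 - α) * ∫ θ, c θ ∂Λ| ≤ η * (Λ.real univ / (2 - α)) := by
  set I := ∫ θ, c θ ∂Λ
  set M := Λ.real univ
  have hscale : ∀ K : ℝ, h ^ (α - 2) * (K * (h ^ (2 - α) / (2 - α))) = K / (2 - α) := fun K => by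
    have : h ^ (α - 2) * h ^ (2 - α) = 1 := by rw [← Real.rpow_add hh]; simp
    calc h ^ (α - 2) * (K * (h ^ (2 - α) / (2 - α)))
        = h ^ (α - 2) * h ^ (2 - α) * K / (2 - α) := by ring
      _ = K / (2 - α) := by rw [this, one_mul]
  obtain ⟨hlo, hhi⟩ := hν.toReal_lintegral_norm_sq_le_mem_Icc hΛ hc hc0 hα0 hα2 hη hh hh1 hq
  have hpow : 0 ≤ h ^ (α - 2) := Real.rpow_nonneg hh.le _
  have hlo' := mul_le_mul_of_nonneg_left hlo hpow
  have hhi' := mul_le_mul_of_nonneg_left hhi hpow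
  rw [hscale] at hlo' hhi'
  rw [abs_sub_le_iff]
  constructor
  · linarith [show (I + η * M) / (2 - α) = 1 / (2 - α) * I + η * (M / (2 - α)) by ring]
  · linarith [show (I - η * M) / (2 - α) = 1 / (2 - α) * I - η * (M / (2 - α)) by ring]

end Polar

theorem stmt13_general {d : ℕ}
    (ν Λ : Measure (EuclideanSpace ℝ (Fin d))) [IsFiniteMeasure Λ]
    (hΛne : Λ ≠ 0)
    (hΛsphere : Λ {θ : EuclideanSpace ℝ (Fin d) | ‖θ‖ ≠ 1} = 0)
    (q : ℝ → EuclideanSpace ℝ (Fin d) → ℝ)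
    (α : ℝ) (hα : α ∈ Set.Ioo (0 : ℝ) 2)
    (c₀ : EuclideanSpace ℝ (Fin d) → ℝ)
    (hc₀pos : ∀ θ : EuclideanSpace ℝ (Fin d), ‖θ‖ = 1 → 0 < c₀ θ)
    (hc₀int : Integrable c₀ Λ)
    (hconv : ∀ η > (0 : ℝ), ∃ r₀ > (0 : ℝ), ∀ r ∈ Set.Ioo (0 : ℝ) r₀,
      ∀ θ : EuclideanSpace ℝ (Fin d), ‖θ‖ = 1 → |r ^ (1 + α) * q r θ - c₀ θ| < η)
    (hpolar : ∀ A : Set (EuclideanSpace ℝ (Fin d)), MeasurableSet A →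
      A ⊆ {z : EuclideanSpace ℝ (Fin d) | 0 < ‖z‖ ∧ ‖z‖ ≤ 1} →
      ν A = ∫⁻ θ, (∫⁻ r in Set.Ioc (0 : ℝ) 1,
        Set.indicator A (fun _ => (1 : ℝ≥0∞)) (r • θ) * ENNReal.ofReal (q r θ)) ∂Λ) :
    Tendsto (fun h : ℝ => h ^ (α - 2) *
        (∫⁻ z in {z : EuclideanSpace ℝ (Fin d) | ‖z‖ ≤ h},
          ENNReal.ofReal (‖z‖ ^ 2) ∂ν).toReal)
      (nhdsWithin 0 (Set.Ioi 0))
      (nhds ((1 / (2 - α)) * ∫ θ, c₀ θ ∂Λ)) ∧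
    0 < (1 / (2 - α)) * ∫ θ, c₀ θ ∂Λ := by
  have hΛ : ∀ᵐ θ ∂Λ, ‖θ‖ = 1 := ae_iff.mpr hΛsphere
  refine ⟨tendsto_of_forall_eventually_abs_sub_le_mul (K := Λ.real univ / (2 - α)) fun η hη => ?_,
    mul_pos (one_div_pos.mpr (sub_pos.mpr hα.2)) (integral_pos_of_ae_pos hΛne hc₀int
      (hΛ.mono hc₀pos))⟩
  obtain ⟨r₀, hr₀, hq⟩ := hconv η hη
  filter_upwards [Ioo_mem_nhdsGT (lt_min hr₀ one_pos)] with h ⟨hh0, hhr⟩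
  exact HasPolarDensity.abs_rpow_mul_lintegral_norm_sq_le_sub_le hpolar hΛ hc₀int hc₀pos hα.1 hα.2
    hη.le hh0 (hhr.le.trans (min_le_right _ _)) fun θ hθ r hr =>
      (hq r ⟨hr.1, hr.2.trans_lt (hhr.trans_le (min_le_left _ _))⟩ θ hθ).le

theorem stmt13 {d : ℕ}
    (ν Λ : Measure (EuclideanSpace ℝ (Fin d))) [IsFiniteMeasure Λ]
    (hΛne : Λ ≠ 0)
    (hΛsphere : Λ {θ : EuclideanSpace ℝ (Fin d) | ‖θ‖ ≠ 1} = 0)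
    (q : ℝ → EuclideanSpace ℝ (Fin d) → ℝ)
    (hq : ∀ r ∈ Set.Ioc (0 : ℝ) 1, ∀ θ : EuclideanSpace ℝ (Fin d), ‖θ‖ = 1 → 0 < q r θ)
    (α : ℝ) (hα : α ∈ Set.Ioo (0 : ℝ) 2)
    (c₀ : EuclideanSpace ℝ (Fin d) → ℝ)
    (hc₀pos : ∀ θ : EuclideanSpace ℝ (Fin d), ‖θ‖ = 1 → 0 < c₀ θ)
    (hc₀int : Integrable c₀ Λ)
    (hconv : ∀ η > (0 : ℝ), ∃ r₀ > (0 : ℝ), ∀ r ∈ Set.Ioo (0 : ℝ) r₀,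
      ∀ θ : EuclideanSpace ℝ (Fin d), ‖θ‖ = 1 → |r ^ (1 + α) * q r θ - c₀ θ| < η)
    (hpolar : ∀ A : Set (EuclideanSpace ℝ (Fin d)), MeasurableSet A →
      A ⊆ {z : EuclideanSpace ℝ (Fin d) | 0 < ‖z‖ ∧ ‖z‖ ≤ 1} →
      ν A = ∫⁻ θ, (∫⁻ r in Set.Ioc (0 : ℝ) 1,
        Set.indicator A (fun _ => (1 : ℝ≥0∞)) (r • θ) * ENNReal.ofReal (q r θ)) ∂Λ) :
    Tendsto (fun h : ℝ => h ^ (α - 2) *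
        (∫⁻ z in {z : EuclideanSpace ℝ (Fin d) | ‖z‖ ≤ h},
          ENNReal.ofReal (‖z‖ ^ 2) ∂ν).toReal)
      (nhdsWithin 0 (Set.Ioi 0))
      (nhds ((1 / (2 - α)) * ∫ θ, c₀ θ ∂Λ)) ∧
    0 < (1 / (2 - α)) * ∫ θ, c₀ θ ∂Λ :=
  stmt13_general ν Λ hΛne hΛsphere q α hα c₀ hc₀pos hc₀int hconv hpolar
end

section
/- Let f ∈ C¹(ℝ^d, (0,∞)) be a probability density of the form f(z) = g(|z|) for some g ∈ C¹((0,∞), (0,∞)) with g'(s) < 0 for all s > 0 and g' ∈ L¹. Then the map r ↦ ∫_{ℝ^d} |f(z + r e₁) - f(z)| dz from (0,∞) to (0,∞) is strictly increasing; in particular it is injective. -/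
/-!
Since `|a - b| = a + b - 2 min a b` and Lebesgue measure is translation invariant,
`∫ |f (z + r e₁) - f z| dz = 2 - 2 ∫ min (f z) (f (z + r e₁)) dz`. As `g` is strictly
decreasing, `min (f z) (f w) = g (max ‖z‖ ‖w‖)`, and by convexity of the norm
`max ‖z‖ ‖z + r v‖` is nondecreasing in `r ≥ 0`. So the overlap integral decreases in `r`,
strictly because the difference of the integrands is continuous and positive at `z = 0`.
-/

open MeasureTheory Set

lemma abs_sub_eq_add_sub_two_mul_min (a b : ℝ) : |a - b| = a + b - 2 * min a b := by
  rw [abs_sub_comm, ← max_sub_min_eq_abs, ← min_add_max]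
  ring

lemma integral_abs_sub_comp_add {G : Type*} [MeasurableSpace G] [AddGroup G]
    [MeasurableAdd G] {μ : Measure G} [μ.IsAddRightInvariant] {f : G → ℝ}
    (hf : Integrable f μ) (v : G) :
    ∫ z, |f (z + v) - f z| ∂μ = 2 * ∫ z, f z ∂μ - 2 * ∫ z, min (f z) (f (z + v)) ∂μ := by
  have hfv : Integrable (fun z => f (z + v)) μ := hf.comp_add_right v
  have hmin : Integrable (fun z => min (f z) (f (z + v))) μ := hf.inf hfv
  have hsum : Integrable (fun z => f (z + v) + f z) μ := hfv.add hf
  calc ∫ z, |f (z + v) - f z| ∂μ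
      = ∫ z, (f (z + v) + f z - 2 * min (f z) (f (z + v))) ∂μ := by
        simp only [abs_sub_eq_add_sub_two_mul_min, min_comm]
    _ = ∫ z, f (z + v) ∂μ + ∫ z, f z ∂μ - 2 * ∫ z, min (f z) (f (z + v)) ∂μ := by
        rw [integral_sub hsum (hmin.const_mul 2), integral_add hfv hf,
          integral_const_mul]
    _ = 2 * ∫ z, f z ∂μ - 2 * ∫ z, min (f z) (f (z + v)) ∂μ := by
        rw [integral_add_right_eq_self]
        ring

section Radial

variable {E : Type*} [NormedAddCommGroup E] [NormedSpace ℝ E]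

lemma norm_add_smul_le_max {x v : E} {r r' : ℝ} (hr : 0 ≤ r) (hrr' : r ≤ r') :
    ‖x + r • v‖ ≤ max ‖x‖ ‖x + r' • v‖ := by
  rcases hr.eq_or_lt with rfl | hr
  · simp
  refine convexOn_univ_norm.le_on_segment (mem_univ _) (mem_univ _) ?_
  rw [segment_eq_image']
  have hr' : 0 < r' := hr.trans_le hrr'
  refine ⟨r / r', ⟨by positivity, div_le_one_of_le₀ hrr' hr'.le⟩, ?_⟩
  simp [smul_smul, div_mul_cancel₀ _ hr'.ne']

lemma continuousOn_Ici_of_comp_norm {f : E → ℝ} {g : ℝ → ℝ} (hf : Continuous f)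
    (hrad : ∀ z, f z = g ‖z‖) {e : E} (he : ‖e‖ = 1) : ContinuousOn g (Ici 0) := by
  have hfe : Continuous fun t : ℝ => f (t • e) := by fun_prop
  exact hfe.continuousOn.congr fun t ht => by
    simp [hrad, norm_smul, he, abs_of_nonneg (mem_Ici.1 ht)]

variable [MeasurableSpace E] [BorelSpace E] {μ : Measure E} [μ.IsAddRightInvariant]
  [μ.IsOpenPosMeasure] {f : E → ℝ} {g : ℝ → ℝ}

lemma strictAntiOn_integral_min_comp_add_smul (hfc : Continuous f) (hfi : Integrable f μ)
    (hrad : ∀ z, f z = g ‖z‖) (hg : StrictAntiOn g (Ici 0)) {v : E} (hv : v ≠ 0) :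
    StrictAntiOn (fun r : ℝ => ∫ z, min (f z) (f (z + r • v)) ∂μ) (Ici 0) := by
  have hmin (x y : E) : min (f x) (f y) = g (max ‖x‖ ‖y‖) := by
    rw [hrad, hrad, hg.antitoneOn.map_max (norm_nonneg x) (norm_nonneg y)]
  have hint (r : ℝ) : Integrable (fun z => min (f z) (f (z + r • v))) μ :=
    hfi.inf (hfi.comp_add_right _)
  have hcont (r : ℝ) : Continuous (fun z => min (f z) (f (z + r • v))) := by fun_prop
  intro r hr r' hr' hrr'
  rw [mem_Ici] at hr hr'
  rw [← sub_pos, ← integral_sub (hint r) (hint r')]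
  refine integral_pos_of_integrable_nonneg_nonzero (x := 0) ((hcont r).sub (hcont r'))
    ((hint r).sub (hint r')) (fun z => ?_) ?_
  · have hmax : max ‖z‖ ‖z + r • v‖ ≤ max ‖z‖ ‖z + r' • v‖ :=
      max_le (le_max_left _ _) (norm_add_smul_le_max hr hrr'.le)
    simpa [hmin] using hg.antitoneOn ((norm_nonneg z).trans (le_max_left _ _))
      ((norm_nonneg z).trans (le_max_left _ _)) hmax
  · have hlt : r * ‖v‖ < r' * ‖v‖ := mul_lt_mul_of_pos_right hrr' (norm_pos_iff.2 hv)
    simp only [hmin, zero_add, norm_zero, norm_smul, Real.norm_eq_abs, abs_of_nonneg hr,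
      abs_of_nonneg hr', max_eq_right (by positivity : (0 : ℝ) ≤ r * ‖v‖),
      max_eq_right (by positivity : (0 : ℝ) ≤ r' * ‖v‖)]
    exact (sub_pos.2 (hg (mem_Ici.2 (by positivity)) (mem_Ici.2 (by positivity)) hlt)).ne'

theorem strictMonoOn_integral_abs_sub_comp_add_smul (hfc : Continuous f)
    (hfi : Integrable f μ) (hrad : ∀ z, f z = g ‖z‖) (hg : StrictAntiOn g (Ici 0))
    {v : E} (hv : v ≠ 0) :
    StrictMonoOn (fun r : ℝ => ∫ z, |f (z + r • v) - f z| ∂μ) (Ici 0) := by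
  intro r hr r' hr' hrr'
  simp only [integral_abs_sub_comp_add hfi]
  linarith [strictAntiOn_integral_min_comp_add_smul hfc hfi hrad hg hv hr hr' hrr']

end Radial

theorem stmt18_general {d : ℕ} (hd : 0 < d)
    (f : EuclideanSpace ℝ (Fin d) → ℝ) (g : ℝ → ℝ)
    (hf : ContDiff ℝ 1 f)
    (hdens : ∫ z, f z = 1)
    (hrad : ∀ z, f z = g ‖z‖)
    (hg' : ∀ s : ℝ, 0 < s → deriv g s < 0) :
    StrictMonoOn
      (fun r : ℝ => ∫ z, |f (z + r • EuclideanSpace.single (⟨0, hd⟩ : Fin d) 1) - f z|)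
      (Set.Ioi 0) ∧
    Set.InjOn
      (fun r : ℝ => ∫ z, |f (z + r • EuclideanSpace.single (⟨0, hd⟩ : Fin d) 1) - f z|)
      (Set.Ioi 0) := by
  set e : EuclideanSpace ℝ (Fin d) := EuclideanSpace.single (⟨0, hd⟩ : Fin d) 1
  have he : ‖e‖ = 1 := by simp [e]
  have hint : Integrable f := .of_integral_ne_zero (by simp [hdens])
  have hg_anti : StrictAntiOn g (Ici 0) :=
    strictAntiOn_of_deriv_neg (convex_Ici 0) (continuousOn_Ici_of_comp_norm hf.continuous hrad he)
      (by simpa using hg')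
  have hmono := (strictMonoOn_integral_abs_sub_comp_add_smul hf.continuous hint hrad hg_anti
    (v := e) (by simp [← norm_pos_iff, he])).mono Ioi_subset_Ici_self
  exact ⟨hmono, hmono.injOn⟩

theorem stmt18 {d : ℕ} (hd : 0 < d)
    (f : EuclideanSpace ℝ (Fin d) → ℝ) (g : ℝ → ℝ)
    (hf : ContDiff ℝ 1 f) (hfpos : ∀ z, 0 < f z)
    (hdens : ∫ z, f z = 1)
    (hrad : ∀ z, f z = g ‖z‖)
    (hg : ContDiffOn ℝ 1 g (Set.Ioi 0))
    (hgpos : ∀ s : ℝ, 0 < s → 0 < g s)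
    (hg' : ∀ s : ℝ, 0 < s → deriv g s < 0)
    (hgL1 : Integrable (fun z : EuclideanSpace ℝ (Fin d) => deriv g ‖z‖)) :
    StrictMonoOn
      (fun r : ℝ => ∫ z, |f (z + r • EuclideanSpace.single (⟨0, hd⟩ : Fin d) 1) - f z|)
      (Set.Ioi 0) ∧
    Set.InjOn
      (fun r : ℝ => ∫ z, |f (z + r • EuclideanSpace.single (⟨0, hd⟩ : Fin d) 1) - f z|)
      (Set.Ioi 0) :=
  stmt18_general hd f g hf hdens hrad hg'
end
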